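/- arXiv:math/9412216 — 11 statements merged into one kernel-verified Lean document; each statement's English description precedes it below -/
import Mathlib

section
/- Let (T_t)_{t>0} be a C₀ semigroup of linear isometries on the complex Banach space c₀ (sequences of complex numbers converging to 0, with the supremum norm). Then for every index k there exists a real number ω_k such that T_t e_k = e^{i ω_k t} · e_k for all t > 0, where e_k denotes the k-th standard unit vector of c₀. -/
open ZeroAtInfty Filter Topology

/-- `c₀` is modelled as `C₀(ℕ, ℂ)`, the space of sequences of complex numbers tending to `0`
with the supremum norm.  `stdBasis k` is the standard unit vector which is `1` in coordinate `k`
and `0` elsewhere (indices are `0`-based, so `stdBasis (k-1)` is the paper's `e_k`). -/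
noncomputable def stdBasis (k : ℕ) : C₀(ℕ, ℂ) :=
  { toFun := fun j => if j = k then 1 else 0
    continuous_toFun := continuous_of_discreteTopology
    zero_at_infty' := by
      rw [cocompact_eq_atTop]
      refine tendsto_nhds_of_eventually_eq ?_
      filter_upwards [eventually_gt_atTop k] with j hj
      simp [Nat.ne_of_gt hj] }


-- nat multiples under local additivity
lemma nsmul_theta (θ : ℝ → ℝ) (δ : ℝ)
    (hadd : ∀ s t : ℝ, 0 < s → 0 < t → s + t ≤ δ → θ (s+t) = θ s + θ t) :
    ∀ n : ℕ, 1 ≤ n → ∀ y : ℝ, 0 < y → n * y ≤ δ → θ (n * y) = n * θ y := by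
  intro n
  induction n with
  | zero => omega
  | succ m ih =>
    intro _ y hy hle
    rcases Nat.eq_zero_or_pos m with hm | hm
    · subst hm; simp
    · have hmy : (0:ℝ) < m * y := by positivity
      have h1 : ((m+1 : ℕ) : ℝ) * y = m * y + y := by push_cast; ring
      have hle' : (m:ℝ) * y ≤ δ := by nlinarith
      have hsum : y + (m:ℝ) * y ≤ δ := by push_cast at hle; linarith
      rw [h1, add_comm ((m:ℝ)*y) y, hadd y (m*y) hy hmy hsum, ih hm y hy hle']
      push_cast; ring

lemma loc_add_linear (θ : ℝ → ℝ) (δ : ℝ) (hδ : 0 < δ)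
    (hadd : ∀ s t : ℝ, 0 < s → 0 < t → s + t ≤ δ → θ (s+t) = θ s + θ t)
    (hlim : Tendsto θ (𝓝[>] (0:ℝ)) (𝓝 0)) :
    ∀ t : ℝ, 0 < t → t ≤ δ → θ t = (θ δ / δ) * t := by
  have hfrac : ∀ p m : ℕ, 0 < p → p ≤ m → θ ((p : ℝ)/m * δ) = (p : ℝ)/m * θ δ := by
    intro p m hp hpm
    have hm : 0 < m := lt_of_lt_of_le hp hpm
    have hym : (0:ℝ) < δ / m := by positivity
    have h1 : (p:ℝ)/m * δ = p * (δ/m) := by field_simp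
    have h2 : θ ((p:ℝ) * (δ/m)) = p * θ (δ/m) := by
      refine nsmul_theta θ δ hadd p hp (δ/m) hym ?_
      have hc : (p:ℝ) ≤ m := by exact_mod_cast hpm
      have hm' : (0:ℝ) < m := by exact_mod_cast hm
      calc (p:ℝ) * (δ/m) ≤ m * (δ/m) := by
            apply mul_le_mul_of_nonneg_right hc (le_of_lt hym)
        _ = δ := by field_simp
    have h3 : θ δ = m * θ (δ/m) := by
      have := nsmul_theta θ δ hadd m hm (δ/m) hym (by field_simp; norm_num)
      rw [mul_div_cancel₀] at this
      · exact this
      · exact_mod_cast hm.ne'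
    rw [h1, h2, h3]
    have : (m:ℝ) ≠ 0 := by exact_mod_cast hm.ne'
    field_simp
  intro t ht htδ
  set ω := θ δ / δ with hω
  rcases eq_or_lt_of_le htδ with rfl | htlt
  · rw [hω]; field_simp
  by_contra hne
  set ε := |θ t - ω * t| with hε
  have hεpos : 0 < ε := by
    rw [hε, abs_pos]
    intro h; exact hne (by linarith [sub_eq_zero.mp h])
  -- from hlim get η
  have := Metric.tendsto_nhdsWithin_nhds.mp hlim (ε/2) (by linarith)
  obtain ⟨η, hη, hηs⟩ := this
  set r₀ := min (min (η/2) (t/2)) (ε/(2*(|ω|+1))) with hr₀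
  have hr₀pos : 0 < r₀ := by
    apply lt_min (lt_min (by linarith) (by linarith))
    positivity
  -- pick rational q in ((t-r₀)/δ, t/δ)
  obtain ⟨q, hq1, hq2⟩ := exists_rat_btwn (show (t - r₀)/δ < t/δ from
    (div_lt_div_iff_of_pos_right hδ).mpr (by linarith))
  have hq0 : (0:ℝ) < (q:ℝ) := by
    have : 0 < (t - r₀)/δ := by
      apply div_pos ?_ hδ
      have : r₀ ≤ t/2 := le_trans (min_le_left _ _) (min_le_right _ _)
      linarith
    linarith
  have hqδ1 : t - r₀ < (q:ℝ) * δ := by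
    rw [div_lt_iff₀ hδ] at hq1; linarith
  have hqδ2 : (q:ℝ) * δ < t := by
    rw [lt_div_iff₀ hδ] at hq2; linarith
  set r := t - (q:ℝ)*δ with hr
  have hrpos : 0 < r := by rw [hr]; linarith
  have hrlt : r < r₀ := by rw [hr]; linarith
  -- θ (q δ) = q θ δ
  have hqnum : 0 < q.num := by
    have : (0:ℚ) < q := by exact_mod_cast hq0
    exact Rat.num_pos.mpr this
  have hqle1 : (q:ℝ) ≤ 1 := by
    have : (q:ℝ)*δ < δ := lt_of_lt_of_le hqδ2 htδ
    nlinarith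
  set p : ℕ := q.num.toNat with hp
  have hppos : 0 < p := by omega
  have hqcast : (q:ℝ) = (p:ℝ)/(q.den:ℝ) := by
    rw [Rat.cast_def]
    congr 1
    rw [hp]
    have : ((q.num.toNat : ℤ) : ℝ) = (q.num : ℝ) := by
      congr 1; omega
    exact_mod_cast this.symm
  have hpm : p ≤ q.den := by
    have h1 : (q:ℚ) ≤ 1 := by exact_mod_cast hqle1
    have h2 : (q.num : ℚ) ≤ (q.den : ℚ) := by
      rw [← Rat.num_div_den q] at h1
      rwa [div_le_one (by exact_mod_cast q.pos)] at h1
    have h3 : q.num ≤ (q.den : ℤ) := by exact_mod_cast h2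
    omega
  have hθq : θ ((q:ℝ) * δ) = (q:ℝ) * θ δ := by
    rw [hqcast]; exact hfrac p q.den hppos hpm
  -- now finish
  have hsplit : θ t = θ ((q:ℝ)*δ) + θ r := by
    have : (q:ℝ)*δ + r = t := by rw [hr]; ring
    rw [← this]
    exact hadd _ _ (by positivity) hrpos (by rw [this]; exact htδ)
  have hrη : |θ r| < ε/2 := by
    have hrmem : r ∈ Set.Ioi (0:ℝ) := hrpos
    have : dist r 0 < η := by
      rw [Real.dist_eq, sub_zero, abs_of_pos hrpos]
      have : r₀ ≤ η/2 := le_trans (min_le_left _ _) (min_le_left _ _)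
      linarith
    have := hηs hrmem this
    rwa [Real.dist_eq, sub_zero] at this
  have hr₀ε : r₀ ≤ ε/(2*(|ω|+1)) := min_le_right _ _
  have : ε ≤ |θ r| + |ω| * r := by
    have : θ t - ω * t = θ r - ω * r := by
      rw [hsplit, hθq, hω, hr]
      field_simp
      ring
    calc ε = |θ r - ω * r| := by rw [hε, this]
      _ ≤ |θ r| + |ω * r| := abs_sub _ _
      _ = |θ r| + |ω| * r := by rw [abs_mul, abs_of_pos hrpos]
  have hwr : |ω| * r ≤ ε/2 := by
    have h1 : |ω| * r ≤ |ω| * (ε/(2*(|ω|+1))) := by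
      apply mul_le_mul_of_nonneg_left ?_ (abs_nonneg ω)
      linarith
    have h2 : |ω| * (ε/(2*(|ω|+1))) ≤ ε/2 := by
      rw [mul_div_assoc', div_le_div_iff₀ (by positivity) (by norm_num)]
      nlinarith [abs_nonneg ω]
    linarith
  clear_value ω ε r₀ r
  have hfin : ε < ε := lt_of_le_of_lt this (by linarith)
  exact lt_irrefl _ hfin


section
variable (c : ℝ → ℂ)

lemma char_pow (hmul : ∀ s t : ℝ, 0 < s → 0 < t → c (s+t) = c s * c t) :
    ∀ n : ℕ, 1 ≤ n → ∀ y : ℝ, 0 < y → c (n * y) = (c y)^n := by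
  intro n
  induction n with
  | zero => omega
  | succ m ih =>
    intro _ y hy
    rcases Nat.eq_zero_or_pos m with hm | hm
    · subst hm; simp
    · have hmy : (0:ℝ) < m * y := by positivity
      have h1 : ((m+1 : ℕ) : ℝ) * y = y + m * y := by push_cast; ring
      rw [h1, hmul y (m*y) hy hmy, ih hm y hy]
      ring

lemma char_eq_exp (hmul : ∀ s t : ℝ, 0 < s → 0 < t → c (s+t) = c s * c t)
    (habs : ∀ t : ℝ, 0 < t → ‖c t‖ = 1)
    (hlim : Tendsto c (𝓝[>] (0:ℝ)) (𝓝 1)) :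
    ∃ ω : ℝ, ∀ t : ℝ, 0 < t → c t = Complex.exp (Complex.I * ω * t) := by
  obtain ⟨δ₀, hδ₀, H⟩ := Metric.tendsto_nhdsWithin_nhds.mp hlim 1 one_pos
  set δ := δ₀/2 with hδdef
  have hδ : 0 < δ := by positivity
  have hnear : ∀ t : ℝ, 0 < t → t ≤ δ → ‖c t - 1‖ < 1 := by
    intro t ht htδ
    have h1 : dist (c t) 1 < 1 := H (Set.mem_Ioi.mpr ht)
      (by rw [Real.dist_eq, sub_zero, abs_of_pos ht]; linarith)
    rwa [dist_eq_norm] at h1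
  have hre : ∀ t : ℝ, 0 < t → t ≤ δ → 0 < (c t).re := by
    intro t ht htδ
    have h1 := hnear t ht htδ
    have h2 : |(c t - 1).re| ≤ ‖c t - 1‖ := Complex.abs_re_le_norm _
    have h3 : (c t - 1).re = (c t).re - 1 := by simp
    rw [h3] at h2
    have := abs_lt.mp (lt_of_le_of_lt h2 h1)
    linarith [this.1]
  set θ : ℝ → ℝ := fun t => Complex.arg (c t) with hθdef
  have hsmall : ∀ t : ℝ, 0 < t → t ≤ δ → |θ t| < Real.pi/2 := by
    intro t ht htδ
    exact Complex.abs_arg_lt_pi_div_two_iff.mpr (Or.inl (hre t ht htδ))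
  have hform : ∀ t : ℝ, 0 < t → c t = Complex.exp (θ t * Complex.I) := by
    intro t ht
    have := Complex.norm_mul_exp_arg_mul_I (c t)
    rw [habs t ht] at this
    simpa using this.symm
  have hadd : ∀ s t : ℝ, 0 < s → 0 < t → s + t ≤ δ → θ (s+t) = θ s + θ t := by
    intro s t hs ht hst
    have hsδ : s ≤ δ := by linarith
    have htδ : t ≤ δ := by linarith
    have he : Complex.exp (θ (s+t) * Complex.I) = Complex.exp ((θ s + θ t) * Complex.I) := by
      rw [← hform (s+t) (by linarith), hmul s t hs ht, hform s hs, hform t ht,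
        ← Complex.exp_add]
      push_cast
      ring_nf
    obtain ⟨n, hn⟩ := Complex.exp_eq_exp_iff_exists_int.mp he
    have him := congrArg Complex.im hn
    simp at him
    -- him : θ (s+t) = θ s + θ t + n * (2π)
    have hpi := Real.pi_pos
    have h1 := hsmall s hs hsδ
    have h2 := hsmall t ht htδ
    have h3 := hsmall (s+t) (by linarith) hst
    have hn0 : n = 0 := by
      rcases lt_trichotomy n 0 with h | h | h
      · exfalso
        have : (n:ℝ) ≤ -1 := by exact_mod_cast Int.le_sub_one_of_lt h
        rw [abs_lt] at h1 h2 h3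
        nlinarith
      · exact h
      · exfalso
        have : (1:ℝ) ≤ (n:ℝ) := by exact_mod_cast h
        rw [abs_lt] at h1 h2 h3
        nlinarith
    rw [hn0] at him
    simpa using him
  have hlimθ : Tendsto θ (𝓝[>] (0:ℝ)) (𝓝 0) := by
    have h1 : ContinuousAt Complex.arg 1 := Complex.continuousAt_arg (by
      exact Complex.one_mem_slitPlane)
    have := h1.tendsto.comp hlim
    rwa [Complex.arg_one] at this
  have hlin := loc_add_linear θ δ hδ hadd hlimθ
  refine ⟨θ δ / δ, ?_⟩
  set ω := θ δ / δ with hω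
  have hsmallcase : ∀ t : ℝ, 0 < t → t ≤ δ → c t = Complex.exp (Complex.I * ω * t) := by
    intro t ht htδ
    rw [hform t ht, hlin t ht htδ]
    push_cast
    ring_nf
  intro t ht
  set n : ℕ := ⌈t/δ⌉₊ with hn
  have hn1 : 1 ≤ n := by
    rw [hn]
    exact Nat.one_le_ceil_iff.mpr (by positivity)
  have hnpos : (0:ℝ) < n := by exact_mod_cast hn1
  have htn : 0 < t/n := by positivity
  have htnδ : t/n ≤ δ := by
    rw [div_le_iff₀ hnpos]
    have := Nat.le_ceil (t/δ)
    rw [← hn] at this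
    calc t = (t/δ) * δ := by field_simp
      _ ≤ n * δ := by nlinarith
      _ = δ * n := by ring
  have hct : c t = (c (t/n))^n := by
    have := char_pow c hmul n hn1 (t/n) htn
    rw [mul_div_cancel₀] at this
    · exact this
    · exact hnpos.ne'
  rw [hct, hsmallcase (t/n) htn htnδ, ← Complex.exp_nat_mul]
  congr 1
  have hnne : ((n:ℕ):ℂ) ≠ 0 := Nat.cast_ne_zero.mpr (by omega)
  push_cast
  field_simp
end

lemma stdBasis_self (k : ℕ) : stdBasis k k = 1 := by simp [stdBasis]
lemma stdBasis_ne {k j : ℕ} (h : j ≠ k) : stdBasis k j = 0 := by simp [stdBasis, h]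

lemma coord_le_norm (x : C₀(ℕ, ℂ)) (j : ℕ) : ‖x j‖ ≤ ‖x‖ := by
  rw [← ZeroAtInftyContinuousMap.norm_toBCF_eq_norm]
  exact (x.toBCF).norm_coe_le_norm j

lemma c0_norm_le (x : C₀(ℕ, ℂ)) {C : ℝ} (hC : 0 ≤ C) (h : ∀ j, ‖x j‖ ≤ C) : ‖x‖ ≤ C := by
  rw [← ZeroAtInftyContinuousMap.norm_toBCF_eq_norm]
  exact (BoundedContinuousFunction.norm_le hC).2 h

lemma norm_stdBasis (k : ℕ) : ‖stdBasis k‖ = 1 := by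
  refine le_antisymm (c0_norm_le _ zero_le_one ?_) ?_
  · intro j
    by_cases h : j = k
    · subst h; simp [stdBasis_self]
    · simp [stdBasis_ne h]
  · have := coord_le_norm (stdBasis k) k
    rwa [stdBasis_self, norm_one] at this


/-- If `(T_t)_{t>0}` is a `C₀` semigroup of linear isometries on `c₀`, then every standard unit
vector `e_k` satisfies `T_t e_k = e^{iω_k t} e_k` for some real `ω_k`. -/
theorem c0_isometric_semigroup_basis_eigenvectors
    (T : ℝ → C₀(ℕ, ℂ) →L[ℂ] C₀(ℕ, ℂ))
    (hsemi : ∀ s t : ℝ, 0 < s → 0 < t → T (s + t) = (T s).comp (T t))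
    (hcont : ∀ x : C₀(ℕ, ℂ), Tendsto (fun t => T t x) (𝓝[>] (0 : ℝ)) (𝓝 x))
    (hiso : ∀ t : ℝ, 0 < t → ∀ x : C₀(ℕ, ℂ), ‖T t x‖ = ‖x‖) :
    ∀ k : ℕ, ∃ ω : ℝ, ∀ t : ℝ, 0 < t →
      T t (stdBasis k) = Complex.exp (Complex.I * ω * t) • stdBasis k := by
  -- small-time control for every index j
  have hsmalldelta : ∀ j : ℕ, ∃ δ : ℝ, 0 < δ ∧
      ∀ t : ℝ, 0 < t → t ≤ δ → ‖T t (stdBasis j) - stdBasis j‖ < 1/2 := by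
    intro j
    obtain ⟨δ₀, hδ₀, H⟩ := Metric.tendsto_nhdsWithin_nhds.mp (hcont (stdBasis j))
      (1/2) (by norm_num)
    refine ⟨δ₀/2, by positivity, fun t ht htδ => ?_⟩
    have := H (Set.mem_Ioi.mpr ht) (by rw [Real.dist_eq, sub_zero, abs_of_pos ht]; linarith)
    rwa [dist_eq_norm] at this
  -- modulus one of the diagonal coefficient
  have hmod : ∀ (j : ℕ) (t : ℝ), 0 < t → ‖T t (stdBasis j) - stdBasis j‖ < 1/2 →
      ‖(T t (stdBasis j)) j‖ = 1 := by
    intro j t ht hsm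
    have hiso1 : ‖T t (stdBasis j)‖ = 1 := by rw [hiso t ht, norm_stdBasis]
    have hup : ‖(T t (stdBasis j)) j‖ ≤ 1 := hiso1 ▸ coord_le_norm _ j
    have hlow : (1:ℝ) ≤ max ‖(T t (stdBasis j)) j‖ (1/2) := by
      have key : ‖T t (stdBasis j)‖ ≤ max ‖(T t (stdBasis j)) j‖ (1/2) := by
        refine c0_norm_le _ (le_max_of_le_right (by norm_num)) ?_
        intro i
        by_cases hij : i = j
        · subst hij; exact le_max_left _ _
        · refine le_max_of_le_right ?_
          have he : (T t (stdBasis j)) i = (T t (stdBasis j) - stdBasis j) i := by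
            have h0 : (T t (stdBasis j) - stdBasis j) i
                = (T t (stdBasis j)) i - stdBasis j i := rfl
            rw [h0, stdBasis_ne hij, sub_zero]
          rw [he]
          exact le_trans (coord_le_norm _ i) (le_of_lt hsm)
      calc (1:ℝ) = ‖T t (stdBasis j)‖ := hiso1.symm
        _ ≤ _ := key
    rcases max_cases ‖(T t (stdBasis j)) j‖ (1/2) with ⟨h1, _⟩ | ⟨h1, _⟩
    · rw [h1] at hlow; linarith
    · rw [h1] at hlow; linarith
  -- the key coordinate lemma
  have hcoordA : ∀ (j : ℕ) (t : ℝ), 0 < t → ‖(T t (stdBasis j)) j‖ = 1 →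
      ∀ x : C₀(ℕ, ℂ), (T t x) j = ((T t (stdBasis j)) j) * x j := by
    intro j t ht ha
    have hw : ∀ w : C₀(ℕ, ℂ), w j = 0 → (T t w) j = 0 := by
      intro w hwj
      by_contra hβ
      set a : ℂ := (T t (stdBasis j)) j with hadef
      set β : ℂ := (T t w) j with hβdef
      have hwne : w ≠ 0 := by
        rintro rfl
        rw [hβdef] at hβ
        simp at hβ
      have hwpos : 0 < ‖w‖ := norm_pos_iff.mpr hwne
      have hβpos : 0 < ‖β‖ := norm_pos_iff.mpr hβ
      set θc : ℂ := ((1/‖w‖ : ℝ) : ℂ) * a * (starRingEnd ℂ β) / (‖β‖ : ℂ) with hθdef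
      have hθabs : ‖θc‖ = 1/‖w‖ := by
        rw [hθdef, norm_div, norm_mul, norm_mul, ha, RCLike.norm_conj, mul_one,
          Complex.norm_real, Complex.norm_real, Real.norm_eq_abs, Real.norm_eq_abs,
          abs_of_pos (by positivity), abs_of_pos hβpos]
        have habsne' : ‖β‖ ≠ 0 := by
          exact hβpos.ne'
        field_simp
      have hθβ : θc * β = ((1/‖w‖ * ‖β‖ : ℝ) : ℂ) * a := by
        have hconj : (starRingEnd ℂ) β * β = ((‖β‖:ℝ) : ℂ)^2 := by
          rw [mul_comm, Complex.mul_conj, Complex.normSq_eq_norm_sq]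
          push_cast
          ring
        have hβne : ((‖β‖:ℝ):ℂ) ≠ 0 := by exact_mod_cast hβpos.ne'
        rw [hθdef, div_mul_eq_mul_div, mul_assoc, hconj]
        have habsne : ((‖β‖ : ℝ) : ℂ) ≠ 0 := by
          exact hβne
        have hwne' : ((‖w‖ : ℝ) : ℂ) ≠ 0 := by exact_mod_cast hwpos.ne'
        push_cast
        field_simp [hwne', habsne]
      -- x₀ = e_j + θc • w has norm ≤ 1
      set x₀ : C₀(ℕ, ℂ) := stdBasis j + θc • w with hx₀def
      have hx₀ : ‖x₀‖ ≤ 1 := by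
        refine c0_norm_le _ zero_le_one ?_
        intro i
        by_cases hij : i = j
        · have h5 : x₀ i = 1 := by
            show stdBasis j i + θc * w i = 1
            rw [hij, stdBasis_self, hwj, mul_zero, add_zero]
          rw [h5, norm_one]
        · have h5 : x₀ i = θc * w i := by
            show stdBasis j i + θc * w i = _
            rw [stdBasis_ne hij, zero_add]
          rw [h5, norm_mul, hθabs]
          calc 1/‖w‖ * ‖w i‖ ≤ 1/‖w‖ * ‖w‖ :=
                mul_le_mul_of_nonneg_left (coord_le_norm w i) (by positivity)
            _ = 1 := by field_simp
      have h1 : (T t x₀) j = a + θc * β := by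
        rw [hx₀def, map_add, map_smul]
        rfl
      have h2 : ‖(T t x₀) j‖ = 1 + 1/‖w‖ * ‖β‖ := by
        rw [h1, hθβ]
        have : a + ((1/‖w‖ * ‖β‖ : ℝ) : ℂ) * a = ((1 + 1/‖w‖ * ‖β‖ : ℝ) : ℂ) * a := by
          push_cast; ring
        rw [this, norm_mul, ha, mul_one]
        rw [Complex.norm_real, Real.norm_eq_abs, abs_of_pos (by positivity)]
      have h3 : ‖(T t x₀) j‖ ≤ 1 := by
        refine le_trans (coord_le_norm _ j) ?_
        rw [hiso t ht]
        exact hx₀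
      rw [h2] at h3
      have : 0 < 1/‖w‖ * ‖β‖ := by positivity
      linarith
    intro x
    set w : C₀(ℕ, ℂ) := x - x j • stdBasis j with hwdef
    have hwj : w j = 0 := by
      show x j - x j * stdBasis j j = 0
      rw [stdBasis_self, mul_one, sub_self]
    have hx : x = w + x j • stdBasis j := by rw [hwdef]; abel
    rw [hx, map_add, map_smul]
    show (T t w) j + x j * (T t (stdBasis j)) j = _
    rw [hw w hwj, zero_add]
    show x j * _ = _ * (w + x j • stdBasis j) j
    have : (w + x j • stdBasis j) j = x j := by
      show w j + x j * stdBasis j j = x j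
      rw [hwj, stdBasis_self, mul_one, zero_add]
    rw [this]
    ring
  intro k
  -- off-diagonal coordinates vanish for all times
  have hzero : ∀ j : ℕ, j ≠ k → ∀ t : ℝ, 0 < t → (T t (stdBasis k)) j = 0 := by
    intro j hjk t ht
    obtain ⟨δ, hδpos, hδ⟩ := hsmalldelta j
    set n : ℕ := ⌈t/δ⌉₊ with hn
    have hn1 : 1 ≤ n := Nat.one_le_ceil_iff.mpr (by positivity)
    have hnpos : (0:ℝ) < n := by exact_mod_cast hn1
    have htn : 0 < t/n := by positivity
    have htnδ : t/n ≤ δ := by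
      rw [div_le_iff₀ hnpos]
      have h7 := Nat.le_ceil (t/δ)
      rw [← hn] at h7
      calc t = (t/δ) * δ := by field_simp
        _ ≤ n * δ := by nlinarith
        _ = δ * n := by ring
    have hP := hcoordA j (t/n) htn (hmod j (t/n) htn (hδ _ htn htnδ))
    set a : ℂ := (T (t/n) (stdBasis j)) j with hadef
    have hiter : ∀ m : ℕ, 1 ≤ m → ∀ x : C₀(ℕ, ℂ),
        (T ((m:ℝ) * (t/n)) x) j = a^m * x j := by
      intro m
      induction m with
      | zero => omega
      | succ l ih =>
        intro _ x
        rcases Nat.eq_zero_or_pos l with hl | hl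
        · subst hl
          simpa using hP x
        · have hly : (0:ℝ) < l * (t/n) := by positivity
          have h8 : ((l+1 : ℕ) : ℝ) * (t/n) = t/n + l * (t/n) := by push_cast; ring
          rw [h8, hsemi (t/n) ((l:ℝ)*(t/n)) htn hly]
          have h9 : (((T (t/n)).comp (T ((l:ℝ)*(t/n)))) x) j
              = (T (t/n) (T ((l:ℝ)*(t/n)) x)) j := rfl
          rw [h9, hP, ih hl]
          ring
    have h10 := hiter n hn1 (stdBasis k)
    rw [mul_div_cancel₀ _ hnpos.ne'] at h10
    rw [h10, stdBasis_ne hjk, mul_zero]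
  -- scalar form
  set c : ℝ → ℂ := fun t => (T t (stdBasis k)) k with hcdef
  have hscal : ∀ t : ℝ, 0 < t → T t (stdBasis k) = c t • stdBasis k := by
    intro t ht
    ext j
    show _ = c t * stdBasis k j
    by_cases hjk : j = k
    · rw [hjk, stdBasis_self, mul_one]
    · rw [stdBasis_ne hjk, mul_zero]
      exact hzero j hjk t ht
  have habs : ∀ t : ℝ, 0 < t → ‖c t‖ = 1 := by
    intro t ht
    have h11 : ‖T t (stdBasis k)‖ = 1 := by rw [hiso t ht, norm_stdBasis]
    rw [hscal t ht] at h11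
    rw [norm_smul (c t) (stdBasis k), norm_stdBasis, mul_one] at h11
    exact h11
  have hmul : ∀ s t : ℝ, 0 < s → 0 < t → c (s+t) = c s * c t := by
    intro s t hs ht
    have h12 : T (s+t) (stdBasis k) = T s (T t (stdBasis k)) := by
      rw [hsemi s t hs ht]; rfl
    have h13 : c (s+t) = (T s (T t (stdBasis k))) k := by
      rw [hcdef]; simp only []; rw [h12]
    rw [h13, hscal t ht, map_smul]
    show c t * (T s (stdBasis k)) k = _
    ring
  have hlim : Tendsto c (𝓝[>] (0:ℝ)) (𝓝 1) := by
    rw [tendsto_iff_norm_sub_tendsto_zero]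
    have hb : ∀ t : ℝ, ‖c t - 1‖ ≤ ‖T t (stdBasis k) - stdBasis k‖ := by
      intro t
      have h14 : c t - 1 = (T t (stdBasis k) - stdBasis k) k := by
        show c t - 1 = (T t (stdBasis k)) k - stdBasis k k
        rw [stdBasis_self]
      rw [h14]
      exact coord_le_norm _ k
    have h15 : Tendsto (fun t => ‖T t (stdBasis k) - stdBasis k‖) (𝓝[>] (0:ℝ)) (𝓝 0) := by
      have := tendsto_iff_norm_sub_tendsto_zero.mp (hcont (stdBasis k))
      exact this
    exact squeeze_zero (fun t => norm_nonneg _) hb h15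
  obtain ⟨ω, hω⟩ := char_eq_exp c hmul habs hlim
  exact ⟨ω, fun t ht => by rw [hscal t ht, hω t ht]⟩
end

section
/- Let T be a linear isometry of the complex Banach space c₀ into itself, and let k be an index such that |(T e_k)(k)| = 1. Then for every index j ≠ k, the k-th coordinate of T e_j is zero: (T e_j)(k) = 0. -/
open ZeroAtInfty Filter Topology

/-- If `T` is a linear isometry of `c₀` with `|(T e_k)(k)| = 1`, then `(T e_j)(k) = 0` for all
`j ≠ k`. -/
theorem c0_isometry_off_diagonal_vanishes
    (T : C₀(ℕ, ℂ) →ₗ[ℂ] C₀(ℕ, ℂ)) (hiso : ∀ x : C₀(ℕ, ℂ), ‖T x‖ = ‖x‖) (k : ℕ)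
    (hk : ‖(T (stdBasis k)) k‖ = 1) :
    ∀ j : ℕ, j ≠ k → (T (stdBasis j)) k = 0 := by
  intro j hj
  by_contra hb
  set a := (T (stdBasis k)) k with ha
  set b := (T (stdBasis j)) k with hbdef
  set c : ℂ := a * (starRingEnd ℂ) b / ‖b‖ with hc
  -- x = stdBasis k + c • stdBasis j has norm 1
  set x : C₀(ℕ, ℂ) := stdBasis k + c • stdBasis j with hx
  have hcn : ‖c‖ = 1 := by
    simp [hc, norm_div, norm_mul, hk, norm_ne_zero_iff.mpr hb]
  have hxle : ‖x‖ ≤ 1 := by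
    rw [← ZeroAtInftyContinuousMap.norm_toBCF_eq_norm]
    refine BoundedContinuousFunction.norm_le (by norm_num) |>.mpr fun n => ?_
    have : x n = (if n = k then (1:ℂ) else 0) + c * (if n = j then 1 else 0) := by
      simp [hx, stdBasis]
    rw [show (x.toBCF n) = x n from rfl, this]
    rcases eq_or_ne n k with rfl | hnk
    · simp [Ne.symm hj, hj]
    · rcases eq_or_ne n j with rfl | hnj
      · simp [hnk, hcn]
      · simp [hnk, hnj]
  have hkey : ‖(T x) k‖ ≤ 1 := by
    calc ‖(T x) k‖ ≤ ‖T x‖ := by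
          rw [← ZeroAtInftyContinuousMap.norm_toBCF_eq_norm]
          exact (T x).toBCF.norm_coe_le_norm k
      _ = ‖x‖ := hiso x
      _ ≤ 1 := hxle
  have hTx : (T x) k = a + c * b := by
    simp [hx, map_add, map_smul, ← ha, ← hbdef]
  have hcb : c * b = a * ‖b‖ := by
    rw [hc]
    have hb' : ((‖b‖ : ℝ) : ℂ) ≠ 0 := by exact_mod_cast norm_ne_zero_iff.mpr hb
    rw [div_mul_eq_mul_div, div_eq_iff hb', mul_assoc, Complex.conj_mul']
    ring
  rw [hTx, hcb] at hkey
  have : ‖a + a * ‖b‖‖ = 1 + ‖b‖ := by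
    have : a + a * ‖b‖ = a * (1 + (‖b‖:ℂ)) := by ring
    rw [this, norm_mul, hk, one_mul]
    rw [show ((1:ℂ) + ‖b‖) = ((1 + ‖b‖ : ℝ) : ℂ) by push_cast; ring,
      Complex.norm_real, Real.norm_of_nonneg (by positivity)]
  rw [this] at hkey
  have : ‖b‖ > 0 := norm_pos_iff.mpr hb
  linarith
end

section
/- Let T be a bounded linear isometry of the complex Banach space c₀ into itself, and let k be an index such that |(T e_k)(k)| = 1. Then for every x ∈ c₀ with x(k) = 0, one has (T x)(k) = 0. -/
open ZeroAtInfty Filter Topology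

/-! If `x(k) = 0` and `‖x‖ ≤ 1`, then `e_k + x` lies in the unit ball, since the two summands
have disjoint supports. Hence `|a + c b| ≤ 1` whenever `|c| ≤ 1 / ‖x‖`, where `a = (T e_k)(k)` and
`b = (T x)(k)`. Choosing `c` in the direction of `a b̄` makes `|a + c b| = 1 + |c| |b|`, so
`b = 0`. -/

namespace ZeroAtInftyContinuousMap

variable {α β : Type*} [TopologicalSpace α] [SeminormedAddCommGroup β]

theorem norm_apply_le (f : C₀(α, β)) (x : α) : ‖f x‖ ≤ ‖f‖ :=
  f.toBCF.norm_coe_le_norm x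

theorem norm_le_of_forall_norm_apply_le {f : C₀(α, β)} {C : ℝ} (hC : 0 ≤ C)
    (h : ∀ x, ‖f x‖ ≤ C) : ‖f‖ ≤ C :=
  (BoundedContinuousFunction.norm_le hC).2 h

end ZeroAtInftyContinuousMap

open ZeroAtInftyContinuousMap in
theorem norm_stdBasis_add_le_one {k : ℕ} {x : C₀(ℕ, ℂ)} (hxk : x k = 0) (hx : ‖x‖ ≤ 1) :
    ‖stdBasis k + x‖ ≤ 1 := by
  refine norm_le_of_forall_norm_apply_le zero_le_one fun j => ?_
  rcases eq_or_ne j k with rfl | hjk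
  · simp [stdBasis, hxk]
  · simpa [stdBasis, hjk] using (norm_apply_le x j).trans hx

theorem RCLike.eq_zero_of_forall_norm_add_mul_le_one {𝕜 : Type*} [RCLike 𝕜] {a b : 𝕜} {r : ℝ}
    (ha : ‖a‖ = 1) (hr : 0 < r) (h : ∀ c : 𝕜, ‖c‖ ≤ r → ‖a + c * b‖ ≤ 1) : b = 0 := by
  set c : 𝕜 := (r : 𝕜) * a * (starRingEnd 𝕜) b / (‖b‖ : 𝕜)
  have hc : ‖c‖ ≤ r := by
    simp only [c, norm_div, norm_mul, RCLike.norm_conj, RCLike.norm_ofReal, ha, mul_one,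
      abs_of_pos hr, abs_norm]
    rw [mul_div_assoc]
    exact mul_le_of_le_one_right hr.le (div_self_le_one _)
  have hcb : a + c * b = a * ((1 + r * ‖b‖ : ℝ) : 𝕜) := by
    rcases eq_or_ne b 0 with rfl | hb
    · simp
    · have hb' : (‖b‖ : 𝕜) ≠ 0 := by simpa using hb
      simp only [c, RCLike.ofReal_add, RCLike.ofReal_one, RCLike.ofReal_mul]
      field_simp
      rw [mul_assoc (r : 𝕜), RCLike.conj_mul]
      ring
  have := h c hc
  rw [hcb, norm_mul, ha, one_mul, RCLike.norm_ofReal, abs_of_pos (by positivity)] at this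
  have : r * ‖b‖ ≤ 0 := by linarith
  exact norm_le_zero_iff.1 (nonpos_of_mul_nonpos_right this hr)

/-- If `T` is a bounded linear isometry of `c₀` with `|(T e_k)(k)| = 1`, then `(T x)(k) = 0`
for every `x` with `x(k) = 0`. -/
theorem c0_isometry_coordinate_vanishes
    (T : C₀(ℕ, ℂ) →L[ℂ] C₀(ℕ, ℂ)) (hiso : ∀ x : C₀(ℕ, ℂ), ‖T x‖ = ‖x‖) (k : ℕ)
    (hk : ‖(T (stdBasis k)) k‖ = 1) :
    ∀ x : C₀(ℕ, ℂ), x k = 0 → (T x) k = 0 := by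
  intro x hxk
  rcases eq_or_ne x 0 with rfl | hx
  · simp
  have hxpos : 0 < ‖x‖ := norm_pos_iff.2 hx
  refine RCLike.eq_zero_of_forall_norm_add_mul_le_one hk (inv_pos.2 hxpos) fun c hc => ?_
  have hcx : ‖c • x‖ ≤ 1 :=
    calc ‖c • x‖ = ‖c‖ * ‖x‖ := norm_smul c x
      _ ≤ ‖x‖⁻¹ * ‖x‖ := by gcongr
      _ = 1 := inv_mul_cancel₀ hxpos.ne'
  calc ‖T (stdBasis k) k + c * T x k‖ = ‖T (stdBasis k + c • x) k‖ := by simp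
    _ ≤ ‖T (stdBasis k + c • x)‖ := ZeroAtInftyContinuousMap.norm_apply_le _ k
    _ = ‖stdBasis k + c • x‖ := hiso _
    _ ≤ 1 := norm_stdBasis_add_le_one (by simp [hxk]) hcx
end

section
/- Let A be the bounded linear operator on the complex Banach space c₀ defined by (A x)(1) = 0 and (A x)(k) = (x(1) − x(k))/k for k ≥ 2. Then for every t ≥ 0 and every x ∈ c₀, the operator exponential exp(tA) satisfies (exp(tA) x)(1) = x(1) and (exp(tA) x)(k) = x(1) + (x(k) − x(1)) e^{−t/k} for all k ≥ 2. -/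
open ZeroAtInfty Filter Topology

/-- The operator-norm topology makes `c₀ →L[ℂ] c₀` a topological ring.  (This instance is found
by typeclass search only up to definitional unfolding, so we register it explicitly in order to
be able to speak about the operator exponential `NormedSpace.exp`.) -/
noncomputable instance : IsTopologicalRing (C₀(ℕ, ℂ) →L[ℂ] C₀(ℕ, ℂ)) := by
  have h := @NonUnitalSeminormedRing.toIsTopologicalRing (C₀(ℕ, ℂ) →L[ℂ] C₀(ℕ, ℂ)) inferInstance
  exact h


noncomputable def evalCLM (k : ℕ) : C₀(ℕ, ℂ) →L[ℂ] ℂ :=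
  LinearMap.mkContinuous
    { toFun := fun f => f k
      map_add' := fun f g => rfl
      map_smul' := fun c f => rfl } 1
    (fun f => by
      simpa [ZeroAtInftyContinuousMap.norm_toBCF_eq_norm] using
        (f.toBCF.norm_coe_le_norm k))

lemma pow_apply_formula (A : C₀(ℕ, ℂ) →L[ℂ] C₀(ℕ, ℂ))
    (hA : ∀ x : C₀(ℕ, ℂ), (A x) 0 = 0 ∧
      ∀ k : ℕ, 1 ≤ k → (A x) k = (x 0 - x k) / ((k : ℂ) + 1))
    (x : C₀(ℕ, ℂ)) :
    ∀ n : ℕ, 1 ≤ n → ((A ^ n) x) 0 = 0 ∧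
      ∀ k : ℕ, 1 ≤ k → ((A ^ n) x) k = (x k - x 0) * (-(1 / ((k : ℂ) + 1))) ^ n := by
  intro n hn
  induction n with
  | zero => omega
  | succ n ih =>
    rcases Nat.eq_or_lt_of_le hn with h1 | h1
    · -- n + 1 = 1
      have hn0 : n = 0 := by omega
      subst hn0
      rw [pow_one]
      refine ⟨(hA x).1, fun k hk => ?_⟩
      rw [(hA x).2 k hk, pow_one]
      have hk0 : ((k : ℂ) + 1) ≠ 0 := Nat.cast_add_one_ne_zero k
      field_simp
      ring
    · have hn1 : 1 ≤ n := by omega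
      obtain ⟨h0, hk⟩ := ih hn1
      have hpow : (A ^ (n + 1)) x = A ((A ^ n) x) := by
        rw [pow_succ']; rfl
      rw [hpow]
      refine ⟨(hA _).1, fun k hk' => ?_⟩
      rw [(hA _).2 k hk', h0, hk k hk']
      rw [pow_succ]
      field_simp
      ring


set_option maxHeartbeats 1000000 in
set_option synthInstance.maxHeartbeats 400000 in
/-- Explicit formula for the semigroup `exp(tA)` generated by the operator `A`
(0-based indexing: coordinate `j` is the paper's coordinate `j + 1`). -/
theorem c0_exp_tA_formula (A : C₀(ℕ, ℂ) →L[ℂ] C₀(ℕ, ℂ))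
    (hA : ∀ x : C₀(ℕ, ℂ), (A x) 0 = 0 ∧
      ∀ k : ℕ, 1 ≤ k → (A x) k = (x 0 - x k) / ((k : ℂ) + 1)) :
    ∀ t : ℝ, 0 ≤ t → ∀ x : C₀(ℕ, ℂ),
      (NormedSpace.exp ((t : ℂ) • A) x) 0 = x 0 ∧
      ∀ k : ℕ, 1 ≤ k →
        (NormedSpace.exp ((t : ℂ) • A) x) k
          = x 0 + (x k - x 0) * Complex.exp (-(t : ℂ) / ((k : ℂ) + 1)) := by
  intro t ht x
  set B : C₀(ℕ, ℂ) →L[ℂ] C₀(ℕ, ℂ) := (t : ℂ) • A with hB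
  -- the coordinate-evaluation of the exponential as a tsum
  have key : ∀ k : ℕ, (NormedSpace.exp B x) k
      = ∑' n : ℕ, ((n.factorial : ℂ))⁻¹ * ((t : ℂ) ^ n * ((A ^ n) x k)) := by
    intro k
    have hsum := NormedSpace.expSeries_summable' (𝕂 := ℂ) B
    have h1 : (NormedSpace.exp B x) k
        = ((evalCLM k).comp ((ContinuousLinearMap.apply ℂ (C₀(ℕ, ℂ))) x))
            (NormedSpace.exp B) := rfl
    rw [h1, NormedSpace.exp_eq_tsum (𝕂 := ℂ),
      ContinuousLinearMap.map_tsum _ hsum]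
    congr 1
    funext n
    have h2 : ((evalCLM k).comp ((ContinuousLinearMap.apply ℂ (C₀(ℕ, ℂ))) x))
        ((n.factorial : ℂ)⁻¹ • B ^ n) = (n.factorial : ℂ)⁻¹ * ((B ^ n) x k) := rfl
    rw [h2]
    congr 1
    haveI : IsScalarTower ℂ ((ℕ →C₀ ℂ) →L[ℂ] ℕ →C₀ ℂ) ((ℕ →C₀ ℂ) →L[ℂ] ℕ →C₀ ℂ) :=
      ⟨fun c f g => ContinuousLinearMap.smul_comp c f g⟩
    haveI : SMulCommClass ℂ ((ℕ →C₀ ℂ) →L[ℂ] ℕ →C₀ ℂ) ((ℕ →C₀ ℂ) →L[ℂ] ℕ →C₀ ℂ) :=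
      ⟨fun c f g => by
        ext y
        simp [ContinuousLinearMap.smul_apply, mul_comm]⟩
    have h3 : B ^ n = ((t : ℂ) ^ n) • A ^ n := by rw [hB]; exact smul_pow ((t : ℂ)) A n
    rw [h3]
    rfl
  constructor
  · rw [key 0]
    rw [tsum_eq_single 0]
    · simp
    · intro n hn
      have := (pow_apply_formula A hA x n (Nat.one_le_iff_ne_zero.mpr hn)).1
      rw [this]; ring
  · intro k hk
    rw [key k]
    set z : ℂ := -(t : ℂ) / ((k : ℂ) + 1) with hz
    have hterm : ∀ n : ℕ,
        ((n.factorial : ℂ))⁻¹ * ((t : ℂ) ^ n * ((A ^ n) x k))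
          = (x k - x 0) * ((n.factorial : ℂ)⁻¹ * z ^ n)
            + (if n = 0 then x 0 else 0) := by
      intro n
      rcases Nat.eq_zero_or_pos n with h | h
      · subst h; simp
      · rw [(pow_apply_formula A hA x n h).2 k hk]
        have : (t : ℂ) ^ n * (-(1 / ((k : ℂ) + 1))) ^ n = z ^ n := by
          rw [← mul_pow, hz]; ring_nf
        simp only [if_neg (Nat.pos_iff_ne_zero.mp h), add_zero]
        rw [← this]; ring
    rw [tsum_congr hterm]
    have hs1 : Summable fun n : ℕ => (x k - x 0) * ((n.factorial : ℂ)⁻¹ * z ^ n) := by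
      apply Summable.mul_left
      simpa [smul_eq_mul] using NormedSpace.expSeries_summable' (𝕂 := ℂ) z
    have hs2 : Summable fun n : ℕ => (if n = 0 then x 0 else (0 : ℂ)) := by
      apply summable_of_ne_finset_zero (s := {0})
      intro n hn
      simp at hn
      simp [hn]
    rw [Summable.tsum_add hs1 hs2, tsum_mul_left, tsum_ite_eq]
    have hexp : ∑' n : ℕ, ((n.factorial : ℂ))⁻¹ * z ^ n = Complex.exp z := by
      rw [Complex.exp_eq_exp_ℂ, NormedSpace.exp_eq_tsum (𝕂 := ℂ)]
      simp [smul_eq_mul]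
    rw [hexp]
    ring
end

section
/- Let A be the bounded linear operator on the complex Banach space c₀ defined by (A x)(1) = 0 and (A x)(k) = (x(1) − x(k))/k for k ≥ 2. Then for every t ≥ 0, the operator exp(tA) is a contraction: ‖exp(tA) x‖ ≤ ‖x‖ for every x ∈ c₀. -/
open ZeroAtInfty Filter Topology

/-- Coordinate evaluation as a continuous linear map on `c₀`. -/
noncomputable def coordCLM (k : ℕ) : C₀(ℕ, ℂ) →L[ℂ] ℂ :=
  LinearMap.mkContinuous
    { toFun := fun f => f k
      map_add' := by intro f g; simp
      map_smul' := by intro c f; simp } 1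
    (fun f => by
      rw [one_mul, ← ZeroAtInftyContinuousMap.norm_toBCF_eq_norm]
      exact f.toBCF.norm_coe_le_norm k)

set_option maxHeartbeats 1000000 in
set_option synthInstance.maxHeartbeats 400000 in
/-- The semigroup `exp(tA)` generated by the operator `A` consists of contractions
(0-based indexing: coordinate `j` is the paper's coordinate `j + 1`). -/
theorem c0_exp_tA_contraction (A : C₀(ℕ, ℂ) →L[ℂ] C₀(ℕ, ℂ))
    (hA : ∀ x : C₀(ℕ, ℂ), (A x) 0 = 0 ∧
      ∀ k : ℕ, 1 ≤ k → (A x) k = (x 0 - x k) / ((k : ℂ) + 1)) :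
    ∀ t : ℝ, 0 ≤ t → ∀ x : C₀(ℕ, ℂ), ‖NormedSpace.exp ((t : ℂ) • A) x‖ ≤ ‖x‖ := by
  intro t ht x
  -- powers of A, pointwise
  have hpow0 : ∀ n : ℕ, ((A ^ (n + 1)) x) 0 = 0 := by
    intro n
    have : (A ^ (n + 1)) x = A ((A ^ n) x) := by rw [pow_succ']; rfl
    rw [this]; exact (hA _).1
  have hpowk : ∀ n : ℕ, ∀ k : ℕ, 1 ≤ k →
      ((A ^ (n + 1)) x) k = (-(1 / ((k : ℂ) + 1))) ^ n * ((x 0 - x k) / ((k : ℂ) + 1)) := by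
    intro n
    induction n with
    | zero => intro k hk; simp [pow_one, (hA x).2 k hk]
    | succ n ih =>
      intro k hk
      have hs : (A ^ (n + 2)) x = A ((A ^ (n + 1)) x) := by rw [pow_succ']; rfl
      rw [hs, (hA _).2 k hk, hpow0 n, ih k hk]
      ring
  set B : C₀(ℕ, ℂ) →L[ℂ] C₀(ℕ, ℂ) := (t : ℂ) • A with hB
  have hsum : Summable fun n : ℕ => ((n.factorial : ℂ))⁻¹ • B ^ n :=
    NormedSpace.expSeries_summable' (𝕂 := ℂ) B
  have hBnx : ∀ n : ℕ, (B ^ n) x = (t : ℂ) ^ n • (A ^ n) x := by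
    intro n
    induction n with
    | zero => simp
    | succ n ih =>
      have h1 : (B ^ (n + 1)) x = B ((B ^ n) x) := by rw [pow_succ']; rfl
      have h2 : (A ^ (n + 1)) x = A ((A ^ n) x) := by rw [pow_succ']; rfl
      rw [h1, h2, ih, hB, ContinuousLinearMap.smul_apply, A.map_smul, smul_smul, ← pow_succ']
  have hterm : ∀ k n : ℕ, ((coordCLM k).comp (ContinuousLinearMap.apply ℂ (C₀(ℕ, ℂ)) x))
      (((n.factorial : ℂ))⁻¹ • B ^ n) = ((n.factorial : ℂ))⁻¹ * ((t : ℂ) ^ n * ((A ^ n) x) k) := by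
    intro k n
    simp [coordCLM, ContinuousLinearMap.comp_apply, hBnx n]
  have hval : ∀ k : ℕ, (NormedSpace.exp B x) k
      = ∑' n : ℕ, ((n.factorial : ℂ))⁻¹ * ((t : ℂ) ^ n * ((A ^ n) x) k) := by
    intro k
    have hφ := ((coordCLM k).comp
      (ContinuousLinearMap.apply ℂ (C₀(ℕ, ℂ)) x)).map_tsum hsum
    rw [NormedSpace.exp_eq_tsum ℂ]
    exact hφ.trans (tsum_congr (hterm k))
  have hsumℂ : ∀ k : ℕ, Summable fun n : ℕ =>
      ((n.factorial : ℂ))⁻¹ * ((t : ℂ) ^ n * ((A ^ n) x) k) := by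
    intro k
    have := hsum.map ((coordCLM k).comp
      (ContinuousLinearMap.apply ℂ (C₀(ℕ, ℂ)) x)) (ContinuousLinearMap.continuous _)
    exact this.congr (hterm k)
  -- closed form of the coordinates of exp(tA) x
  have hv0 : (NormedSpace.exp B x) 0 = x 0 := by
    rw [hval 0, tsum_eq_single 0 (fun n hn => by
      obtain ⟨m, rfl⟩ := Nat.exists_eq_succ_of_ne_zero hn
      simp only [Nat.succ_eq_add_one, hpow0 m, mul_zero])]
    simp
  have hexpz : ∀ z : ℂ, ∑' n : ℕ, (((n + 1).factorial : ℂ))⁻¹ * z ^ (n + 1)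
      = Complex.exp z - 1 := by
    intro z
    have h0 : Complex.exp z = ∑' n : ℕ, ((n.factorial : ℂ))⁻¹ * z ^ n := by
      rw [Complex.exp_eq_exp_ℂ, NormedSpace.exp_eq_tsum ℂ]
      simp [smul_eq_mul]
    have hs : Summable fun n : ℕ => ((n.factorial : ℂ))⁻¹ * z ^ n := by
      have := NormedSpace.expSeries_summable' (𝕂 := ℂ) z
      simpa [smul_eq_mul] using this
    rw [h0, Summable.tsum_eq_zero_add hs]
    simp
  have hvk : ∀ k : ℕ, 1 ≤ k → (NormedSpace.exp B x) k
      = x k - (x 0 - x k) * (Complex.exp (-((t : ℂ) / ((k : ℂ) + 1))) - 1) := by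
    intro k hk
    have hk0 : ((k : ℂ) + 1) ≠ 0 := Nat.cast_add_one_ne_zero k
    set z : ℂ := -((t : ℂ) / ((k : ℂ) + 1)) with hz
    rw [hval k, Summable.tsum_eq_zero_add (hsumℂ k)]
    have hterm' : ∀ n : ℕ, (((n + 1).factorial : ℂ))⁻¹ * ((t : ℂ) ^ (n + 1) * ((A ^ (n + 1)) x) k)
        = -(x 0 - x k) * ((((n + 1).factorial : ℂ))⁻¹ * z ^ (n + 1)) := by
      intro n
      have e1 : (-((t : ℂ) / ((k : ℂ) + 1))) ^ (n + 1)
          = (-1 : ℂ) ^ n * (-((t : ℂ) ^ (n + 1) / ((k : ℂ) + 1) ^ (n + 1))) := by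
        rw [neg_pow, div_pow]; ring
      have e2 : (-(1 / ((k : ℂ) + 1))) ^ n = (-1 : ℂ) ^ n * (1 / ((k : ℂ) + 1) ^ n) := by
        rw [neg_pow, div_pow, one_pow]
      rw [hpowk n k hk, hz, e1, e2]
      field_simp
      ring
    rw [tsum_congr hterm', tsum_mul_left, hexpz z]
    simp
    ring
  -- the bound
  have hxle : ∀ i : ℕ, ‖x i‖ ≤ ‖x‖ := fun i => by
    rw [← ZeroAtInftyContinuousMap.norm_toBCF_eq_norm]
    exact x.toBCF.norm_coe_le_norm i
  rw [← ZeroAtInftyContinuousMap.norm_toBCF_eq_norm]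
  refine (BoundedContinuousFunction.norm_le (norm_nonneg x)).2 fun j => ?_
  show ‖(NormedSpace.exp B x) j‖ ≤ ‖x‖
  cases j with
  | zero => rw [hv0]; exact hxle 0
  | succ k =>
    have hk1 : 1 ≤ k + 1 := Nat.succ_le_succ (Nat.zero_le k)
    rw [hvk (k + 1) hk1]
    set s : ℝ := t / (((k + 1 : ℕ) : ℝ) + 1) with hs
    have hs0 : 0 ≤ s := by positivity
    set r : ℝ := Real.exp (-s) with hr
    have hr0 : 0 ≤ r := (Real.exp_pos _).le
    have hr1 : r ≤ 1 := Real.exp_le_one_iff.2 (by linarith)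
    have hc : Complex.exp (-((t : ℂ) / (((k + 1 : ℕ) : ℂ) + 1))) = (r : ℂ) := by
      rw [hr, Complex.ofReal_exp, hs]
      push_cast
      ring_nf
    rw [hc]
    have hrewrite : x (k + 1) - (x 0 - x (k + 1)) * ((r : ℂ) - 1)
        = (r : ℂ) * x (k + 1) + ((1 - r : ℝ) : ℂ) * x 0 := by push_cast; ring
    rw [hrewrite]
    calc ‖(r : ℂ) * x (k + 1) + ((1 - r : ℝ) : ℂ) * x 0‖
        ≤ ‖(r : ℂ) * x (k + 1)‖ + ‖((1 - r : ℝ) : ℂ) * x 0‖ := norm_add_le _ _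
      _ = r * ‖x (k + 1)‖ + (1 - r) * ‖x 0‖ := by
          rw [norm_mul, norm_mul, Complex.norm_real, Complex.norm_real,
            Real.norm_eq_abs, Real.norm_eq_abs, abs_of_nonneg hr0,
            abs_of_nonneg (by linarith : (0 : ℝ) ≤ 1 - r)]
      _ ≤ r * ‖x‖ + (1 - r) * ‖x‖ :=
          add_le_add (mul_le_mul_of_nonneg_left (hxle _) hr0)
            (mul_le_mul_of_nonneg_left (hxle _) (by linarith))
      _ = ‖x‖ := by ring
end

section
/- Let A be the bounded linear operator on the complex Banach space c₀ defined by (A x)(1) = 0 and (A x)(k) = (x(1) − x(k))/k for k ≥ 2. Then for every t ≥ 0, the first coordinate of exp(tA) e_1 equals 1; that is, ⟨exp(tA) e_1, e_1*⟩ = 1, where e_1* is the first coordinate functional. -/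
open ZeroAtInfty Filter Topology
open scoped Nat

/-- Evaluation at coordinate `0` as a continuous linear functional on `c₀`. -/
noncomputable def ev0 : C₀(ℕ, ℂ) →L[ℂ] ℂ :=
  LinearMap.mkContinuous
    { toFun := fun x => x 0
      map_add' := fun x y => rfl
      map_smul' := fun c x => rfl } 1
    (fun x => by
      rw [one_mul, ← ZeroAtInftyContinuousMap.norm_toBCF_eq_norm]
      exact (x.toBCF).norm_coe_le_norm 0)

set_option synthInstance.maxHeartbeats 1000000 in
set_option maxHeartbeats 1000000 in
/-- The first coordinate of `exp(tA) e₁` is identically `1`; i.e. `⟨exp(tA) e₁, e₁*⟩ = 1`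
where `e₁* ∈ J(e₁)` is the first coordinate functional.  (In our 0-based indexing the
paper's `e₁` is `stdBasis 0` and `e₁*` is evaluation at coordinate `0`.) -/
theorem c0_exp_tA_first_coordinate (A : C₀(ℕ, ℂ) →L[ℂ] C₀(ℕ, ℂ))
    (hA : ∀ x : C₀(ℕ, ℂ), (A x) 0 = 0 ∧
      ∀ k : ℕ, 1 ≤ k → (A x) k = (x 0 - x k) / ((k : ℂ) + 1)) :
    ∀ t : ℝ, 0 ≤ t → (NormedSpace.exp ((t : ℂ) • A) (stdBasis 0)) 0 = 1 := by
  intro t _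
  set B := (t : ℂ) • A with hB
  set v := stdBasis 0 with hvdef
  have hv : v 0 = 1 := by simp [hvdef, stdBasis]
  have h0 : ∀ y : C₀(ℕ, ℂ), (B y) 0 = 0 := by
    intro y
    have h1 := (hA y).1
    simp [hB, h1]
  have hsum := NormedSpace.expSeries_summable' (𝕂 := ℂ) B
  have happ := (ContinuousLinearMap.apply ℂ C₀(ℕ, ℂ) v).map_tsum hsum
  have hexpv : NormedSpace.exp B v = ∑' n : ℕ, ((n ! : ℂ)⁻¹ • B ^ n) v :=
    (congrArg (fun T => T v) (congrFun (NormedSpace.exp_eq_tsum (𝕂 := ℂ)) B)).trans happ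
  have hsum2 := hsum.map (ContinuousLinearMap.apply ℂ C₀(ℕ, ℂ) v).toLinearMap
    (ContinuousLinearMap.apply ℂ C₀(ℕ, ℂ) v).continuous
  have hev := ev0.map_tsum hsum2
  simp only [Function.comp, ContinuousLinearMap.coe_coe,
    ContinuousLinearMap.apply_apply] at hev
  show ev0 (NormedSpace.exp B v) = 1
  rw [hexpv, hev, tsum_eq_single 0]
  · simp only [pow_zero, ContinuousLinearMap.smul_apply, ContinuousLinearMap.one_apply,
      map_smul]
    show (0! : ℂ)⁻¹ • ev0 v = 1
    have h2 : ev0 v = 1 := hv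
    simp [h2]
  · intro n hn
    obtain ⟨m, rfl⟩ := Nat.exists_eq_succ_of_ne_zero hn
    have hp : (B ^ (m + 1)) v = B ((B ^ m) v) := by rw [pow_succ']; rfl
    simp only [ContinuousLinearMap.smul_apply, hp, map_smul]
    have h3 : ev0 (B ((B ^ m) v)) = 0 := h0 _
    simp only [h3, smul_zero]
end

section
/- Let A be the bounded linear operator on the complex Banach space c₀ defined by (A x)(1) = 0 and (A x)(k) = (x(1) − x(k))/k for k ≥ 2. If λ ∈ ℂ is purely imaginary (Re λ = 0, including λ = 0) and x ∈ c₀ satisfies A x = λ x, then x = 0. In other words, A has no eigenvector associated with a purely imaginary eigenvalue or with 0. -/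
open ZeroAtInfty Filter Topology

/-!
Comparing the coordinates of `A x = λ x` gives `λ x₀ = 0` and `x_k (1 + λ (k + 1)) = x₀` for
`k ≥ 1`, and `1 + λ (k + 1)` has real part `1`. So `x_k` is a fixed multiple of `x₀`, and `x₀ = 0`:
for `λ ≠ 0` directly, for `λ = 0` because `x` is then constant from index `1` on and tends to `0`.
-/

namespace ZeroAtInftyContinuousMap

variable {E : Type*} [TopologicalSpace E] [Zero E]

theorem tendsto_atTop_nat (f : C₀(ℕ, E)) : Tendsto f atTop (𝓝 0) := by
  simpa [cocompact_eq_atTop] using f.zero_at_infty'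

theorem eq_zero_of_eventually_eq [T2Space E] (f : C₀(ℕ, E)) {c : E}
    (h : ∀ᶠ k in atTop, f k = c) : c = 0 :=
  tendsto_nhds_unique (tendsto_const_nhds.congr' (h.mono fun _ hk => hk.symm))
    f.tendsto_atTop_nat

end ZeroAtInftyContinuousMap

theorem Complex.one_add_mul_ofReal_ne_zero {lam : ℂ} (hre : lam.re = 0) (r : ℝ) :
    1 + lam * r ≠ 0 := fun h => by simpa [hre] using congrArg Complex.re h

section Eigenvector

variable {A : C₀(ℕ, ℂ) →L[ℂ] C₀(ℕ, ℂ)}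
  (hA : ∀ x : C₀(ℕ, ℂ), (A x) 0 = 0 ∧
    ∀ k : ℕ, 1 ≤ k → (A x) k = (x 0 - x k) / ((k : ℂ) + 1))
  {lam : ℂ} {x : C₀(ℕ, ℂ)} (hx : A x = lam • x)
include hA hx

theorem eigen_mul_coord_zero : lam * x 0 = 0 := by
  simpa [hx] using (hA x).1

theorem eigen_coord_mul (k : ℕ) (hk : 1 ≤ k) : x k * (1 + lam * ((k : ℂ) + 1)) = x 0 := by
  have h := (hA x).2 k hk
  rw [hx, ZeroAtInftyContinuousMap.smul_apply, smul_eq_mul,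
    eq_div_iff (Nat.cast_add_one_ne_zero k)] at h
  linear_combination h

end Eigenvector

/-- The operator `A` has no eigenvector associated with a purely imaginary eigenvalue
(including `0`): if `Re λ = 0` and `A x = λ x` then `x = 0`. -/
theorem c0_operator_A_no_imaginary_eigenvalue (A : C₀(ℕ, ℂ) →L[ℂ] C₀(ℕ, ℂ))
    (hA : ∀ x : C₀(ℕ, ℂ), (A x) 0 = 0 ∧
      ∀ k : ℕ, 1 ≤ k → (A x) k = (x 0 - x k) / ((k : ℂ) + 1)) :
    ∀ lam : ℂ, lam.re = 0 → ∀ x : C₀(ℕ, ℂ), A x = lam • x → x = 0 := by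
  intro lam hre x hx
  have hcoord := eigen_coord_mul hA hx
  have hx0 : x 0 = 0 := by
    rcases eq_or_ne lam 0 with rfl | hlam
    · refine x.eq_zero_of_eventually_eq ((eventually_ge_atTop 1).mono fun k hk => ?_)
      simpa using hcoord k hk
    · exact (mul_eq_zero.mp (eigen_mul_coord_zero hA hx)).resolve_left hlam
  ext (_ | k)
  · exact hx0
  · have hne := Complex.one_add_mul_ofReal_ne_zero hre (k + 1 + 1)
    push_cast at hne
    simpa [hx0, hne] using hcoord (k + 1) le_add_self
end

section
/- Let A be the bounded linear operator on the complex Banach space c₀ defined by (A x)(1) = 0 and (A x)(k) = (x(1) − x(k))/k for k ≥ 2. Then there is no nonzero vector y ∈ c₀ and real number ω such that exp(tA) y = e^{iωt} · y for all t > 0. -/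
open ZeroAtInfty Filter Topology

instance : ContinuousSMul ℝ (C₀(ℕ, ℂ) →L[ℂ] C₀(ℕ, ℂ)) := by
  have h := @IsBoundedSMul.continuousSMul ℝ (C₀(ℕ, ℂ) →L[ℂ] C₀(ℕ, ℂ)) _ _ _ _ _ (by exact @NormedSpace.toIsBoundedSMul ℝ (C₀(ℕ, ℂ) →L[ℂ] C₀(ℕ, ℂ)) _ _ _)
  exact h


set_option maxHeartbeats 1000000 in
set_option synthInstance.maxHeartbeats 1000000 in
/-- Differentiating the relation `exp(tA) y = e^{iωt} y` at `t = 1` and cancelling the invertible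
operator `exp(A)` yields the eigenvector relation `A y = (iω) • y`. -/
theorem aux_eigen_c0 (A : C₀(ℕ, ℂ) →L[ℂ] C₀(ℕ, ℂ)) (y : C₀(ℕ, ℂ)) (ω : ℝ)
    (hy : ∀ t : ℝ, 0 < t →
      NormedSpace.exp ((t : ℂ) • A) y = Complex.exp (Complex.I * ω * t) • y) :
    A y = (Complex.I * ω) • y := by
  have h1 : HasDerivAt (fun u : ℂ => NormedSpace.exp (u • A))
      (NormedSpace.exp ((1:ℂ) • A) * A) (((1:ℝ):ℂ)) := by
    rw [Complex.ofReal_one]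
    exact hasDerivAt_exp_smul_const (𝕂 := ℂ) A 1
  have h2 : HasDerivAt (fun t : ℝ => NormedSpace.exp ((t : ℂ) • A))
      (NormedSpace.exp ((1:ℂ) • A) * A) 1 := by
    have h := HasDerivAt.scomp (F := C₀(ℕ, ℂ) →L[ℂ] C₀(ℕ, ℂ)) (1:ℝ) h1 Complex.ofRealCLM.hasDerivAt
    simp at h
    exact h
  have hL : HasDerivAt (fun t : ℝ => NormedSpace.exp ((t : ℂ) • A) y)
      ((NormedSpace.exp ((1:ℂ) • A) * A) y) 1 := by
    have h3 := (((ContinuousLinearMap.apply ℂ (C₀(ℕ, ℂ)) y).restrictScalars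
      ℝ).hasFDerivAt (x := NormedSpace.exp (((1:ℝ):ℂ) • A))).comp_hasDerivAt (F := C₀(ℕ, ℂ) →L[ℂ] C₀(ℕ, ℂ)) (1:ℝ) h2
    simp at h3
    exact h3
  have hR : HasDerivAt (fun t : ℝ => Complex.exp (Complex.I * ω * t) • y)
      ((Complex.exp (Complex.I * ω * 1) * (Complex.I * ω)) • y) 1 := by
    have h : HasDerivAt (fun z : ℂ => Complex.exp (Complex.I * ω * z))
        (Complex.exp (Complex.I * ω * 1) * (Complex.I * ω)) (((1:ℝ):ℂ)) := by
      simpa using ((hasDerivAt_id (((1:ℝ):ℂ))).const_mul (Complex.I * ω)).cexp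
    exact (h.comp_ofReal).smul_const y
  have heq : (fun t : ℝ => NormedSpace.exp ((t : ℂ) • A) y)
      =ᶠ[𝓝 (1:ℝ)] fun t : ℝ => Complex.exp (Complex.I * ω * t) • y := by
    filter_upwards [Ioi_mem_nhds (by norm_num : (0:ℝ) < 1)] with t ht
    exact hy t ht
  have hL' : HasDerivAt (fun t : ℝ => Complex.exp (Complex.I * ω * t) • y)
      ((NormedSpace.exp ((1:ℂ) • A) * A) y) 1 := (heq.hasDerivAt_iff).mp hL
  have hder : (NormedSpace.exp ((1:ℂ) • A) * A) y
      = (Complex.exp (Complex.I * ω * 1) * (Complex.I * ω)) • y := hL'.unique hR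
  have hval : NormedSpace.exp ((1:ℂ) • A) y = Complex.exp (Complex.I * ω * 1) • y := by
    simpa using hy 1 one_pos
  have key : NormedSpace.exp ((1:ℂ) • A) (A y)
      = NormedSpace.exp ((1:ℂ) • A) ((Complex.I * ω) • y) :=
    calc NormedSpace.exp ((1:ℂ) • A) (A y) = (NormedSpace.exp ((1:ℂ) • A) * A) y :=
          (ContinuousLinearMap.mul_apply _ _ _).symm
      _ = (Complex.exp (Complex.I * ω * 1) * (Complex.I * ω)) • y := hder
      _ = (Complex.I * ω) • (Complex.exp (Complex.I * ω * 1) • y) := by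
          rw [smul_smul]; ring_nf
      _ = (Complex.I * ω) • (NormedSpace.exp ((1:ℂ) • A) y) := by rw [hval]
      _ = NormedSpace.exp ((1:ℂ) • A) ((Complex.I * ω) • y) := (map_smul _ _ _).symm
  obtain ⟨u, hu⟩ := NormedSpace.isUnit_exp_of_mem_ball (𝕂 := ℂ)
    (𝔸 := C₀(ℕ, ℂ) →L[ℂ] C₀(ℕ, ℂ)) (x := (1:ℂ) • A)
    (by rw [NormedSpace.expSeries_radius_eq_top]; simp)
  have h4 : ((u⁻¹ : (C₀(ℕ, ℂ) →L[ℂ] C₀(ℕ, ℂ))ˣ) * u : C₀(ℕ, ℂ) →L[ℂ] C₀(ℕ, ℂ)) (A y)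
      = ((u⁻¹ : (C₀(ℕ, ℂ) →L[ℂ] C₀(ℕ, ℂ))ˣ) * u : C₀(ℕ, ℂ) →L[ℂ] C₀(ℕ, ℂ))
        ((Complex.I * ω) • y) := by
    rw [ContinuousLinearMap.mul_apply, ContinuousLinearMap.mul_apply, hu, key]
  rw [← Units.val_mul, inv_mul_cancel] at h4
  simpa using h4


/-- There is no nonzero `y ∈ c₀` and real `ω` with `exp(tA) y = e^{iωt} y` for all `t > 0`. -/
theorem c0_exp_tA_no_unimodular_eigenvector (A : C₀(ℕ, ℂ) →L[ℂ] C₀(ℕ, ℂ))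
    (hA : ∀ x : C₀(ℕ, ℂ), (A x) 0 = 0 ∧
      ∀ k : ℕ, 1 ≤ k → (A x) k = (x 0 - x k) / ((k : ℂ) + 1)) :
    ¬ ∃ (y : C₀(ℕ, ℂ)) (ω : ℝ), y ≠ 0 ∧ ∀ t : ℝ, 0 < t →
        NormedSpace.exp ((t : ℂ) • A) y = Complex.exp (Complex.I * ω * t) • y := by
  rintro ⟨y, ω, hyne, hy⟩
  apply hyne
  have hAy : A y = (Complex.I * ω) • y := aux_eigen_c0 A y ω hy
  obtain ⟨h0, hk⟩ := hA y
  have hcoord : ∀ j : ℕ, (A y) j = (Complex.I * ω) * y j := by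
    intro j; rw [hAy]; simp
  by_cases hω : ω = 0
  · subst hω
    have hconst : ∀ k : ℕ, 1 ≤ k → y k = y 0 := by
      intro k hk1
      have h1 := (hcoord k).symm.trans (hk k hk1)
      simp only [Complex.ofReal_zero, mul_zero, zero_mul] at h1
      have hden : ((k : ℂ) + 1) ≠ 0 := Nat.cast_add_one_ne_zero k
      rw [eq_comm, div_eq_zero_iff] at h1
      rcases h1 with h1 | h1
      · exact (sub_eq_zero.mp h1).symm
      · exact absurd h1 hden
    have htends : Tendsto (⇑y) atTop (𝓝 (0 : ℂ)) := by
      have := y.zero_at_infty'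
      rwa [cocompact_eq_atTop] at this
    have htends' : Tendsto (⇑y) atTop (𝓝 (y 0)) := by
      refine Tendsto.congr' ?_ tendsto_const_nhds
      filter_upwards [eventually_ge_atTop 1] with j hj
      exact (hconst j hj).symm
    have hy0 : y 0 = 0 := tendsto_nhds_unique htends' htends
    ext j
    rcases Nat.eq_zero_or_pos j with rfl | hj
    · simpa using hy0
    · simpa using (hconst j hj).trans hy0
  · have hIω : Complex.I * ω ≠ 0 :=
      mul_ne_zero Complex.I_ne_zero (Complex.ofReal_ne_zero.mpr hω)
    have hy0 : y 0 = 0 := by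
      have := (hcoord 0).symm.trans h0
      exact (mul_eq_zero.mp this).resolve_left hIω
    ext j
    rcases Nat.eq_zero_or_pos j with rfl | hj
    · simpa using hy0
    · have h1 := (hcoord j).symm.trans (hk j hj)
      rw [hy0, zero_sub] at h1
      have hden : ((j : ℂ) + 1) ≠ 0 := Nat.cast_add_one_ne_zero j
      have h2 : y j * (1 + Complex.I * ω * ((j : ℂ) + 1)) = 0 := by
        field_simp at h1
        linear_combination h1
      have h3 : (1 + Complex.I * ω * ((j : ℂ) + 1)) ≠ 0 := by
        intro h
        have := congrArg Complex.re h
        simp [Complex.add_re, Complex.mul_re, Complex.mul_im] at this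
      simpa using (mul_eq_zero.mp h2).resolve_right h3
end

section
/- Let H be a complex Hilbert space and let (T_t)_{t>0} be a C₀ contraction semigroup on H. If x ∈ H is a unit vector such that lim_{t→∞} |⟨T_t x, x⟩| = 1, then there exists a real number λ such that T_t x = e^{iλt} · x for all t > 0. -/
open Filter Topology

lemma contraction_inner_preserved {H : Type*} [NormedAddCommGroup H] [InnerProductSpace ℂ H]
    [CompleteSpace H] (A : H →L[ℂ] H) (hA : ‖A‖ ≤ 1) (y : H) (hy : ‖A y‖ = ‖y‖) (z : H) :
    (inner ℂ (A y) (A z) : ℂ) = inner ℂ y z := by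
  have key : ContinuousLinearMap.adjoint A (A y) = y := by
    have h1 : (RCLike.re (inner ℂ (ContinuousLinearMap.adjoint A (A y)) y : ℂ)) = ‖y‖ ^ 2 := by
      rw [ContinuousLinearMap.adjoint_inner_left]
      rw [← hy, ← @inner_self_eq_norm_sq ℂ]
    have h2 : ‖ContinuousLinearMap.adjoint A (A y)‖ ≤ ‖y‖ := by
      calc ‖ContinuousLinearMap.adjoint A (A y)‖ ≤ ‖ContinuousLinearMap.adjoint A‖ * ‖A y‖ :=
            ContinuousLinearMap.le_opNorm _ _
        _ ≤ 1 * ‖y‖ := by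
            rw [hy]
            apply mul_le_mul_of_nonneg_right _ (norm_nonneg y)
            rw [LinearIsometryEquiv.norm_map]
            exact hA
        _ = ‖y‖ := one_mul _
    have h3 : ‖ContinuousLinearMap.adjoint A (A y) - y‖ ^ 2 ≤ 0 := by
      rw [norm_sub_sq (𝕜 := ℂ), h1]
      nlinarith [norm_nonneg (ContinuousLinearMap.adjoint A (A y)), norm_nonneg y]
    have h4 : ‖ContinuousLinearMap.adjoint A (A y) - y‖ = 0 := by
      nlinarith [norm_nonneg (ContinuousLinearMap.adjoint A (A y) - y)]
    rwa [norm_eq_zero, sub_eq_zero] at h4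
  rw [← ContinuousLinearMap.adjoint_inner_left, key]

/-- Goldstein's theorem: if `(T_t)_{t>0}` is a `C₀` contraction semigroup on a complex Hilbert
space and `x` is a unit vector with `lim_{t→∞} |⟨T_t x, x⟩| = 1`, then `T_t x = e^{iλt} x` for
some real `λ`. -/
theorem hilbert_contraction_semigroup_eigenvector
    {H : Type*} [NormedAddCommGroup H] [InnerProductSpace ℂ H] [CompleteSpace H]
    (T : ℝ → H →L[ℂ] H)
    (hsemi : ∀ s t : ℝ, 0 < s → 0 < t → T (s + t) = (T s).comp (T t))
    (hcont : ∀ x : H, Tendsto (fun t => T t x) (𝓝[>] (0 : ℝ)) (𝓝 x))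
    (hcontr : ∀ t : ℝ, 0 < t → ‖T t‖ ≤ 1)
    (x : H) (hx : ‖x‖ = 1)
    (hlim : Tendsto (fun t : ℝ => ‖(inner ℂ (T t x) x : ℂ)‖) atTop (𝓝 1)) :
    ∃ lam : ℝ, ∀ t : ℝ, 0 < t → T t x = Complex.exp (Complex.I * lam * t) • x := by
  set f : ℝ → ℂ := fun t => (inner ℂ x (T t x) : ℂ) with hf_def
  -- rewrite hlim in terms of f
  have hlim' : Tendsto (fun t : ℝ => ‖f t‖) atTop (𝓝 1) := by
    have : (fun t : ℝ => ‖f t‖) = fun t : ℝ => ‖(inner ℂ (T t x) x : ℂ)‖ := by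
      funext t; exact (norm_inner_symm x (T t x))
    rw [this]; exact hlim
  -- T t x has norm at most 1
  have hle1 : ∀ t : ℝ, 0 < t → ‖T t x‖ ≤ 1 := by
    intro t ht
    calc ‖T t x‖ ≤ ‖T t‖ * ‖x‖ := ContinuousLinearMap.le_opNorm _ _
      _ ≤ 1 * 1 := by
          apply mul_le_mul (hcontr t ht) (le_of_eq hx) (norm_nonneg x) zero_le_one
      _ = 1 := by ring
  -- |f t| ≤ ‖T t x‖
  have hfle : ∀ t : ℝ, ‖f t‖ ≤ ‖T t x‖ := by
    intro t
    calc ‖f t‖ ≤ ‖x‖ * ‖T t x‖ := norm_inner_le_norm _ _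
      _ = ‖T t x‖ := by rw [hx, one_mul]
  -- Step 1 : ‖T t x‖ = 1
  have hnorm : ∀ t : ℝ, 0 < t → ‖T t x‖ = 1 := by
    intro t ht
    refine le_antisymm (hle1 t ht) ?_
    have htend : Tendsto (fun s : ℝ => ‖f (s + t)‖) atTop (𝓝 1) :=
      hlim'.comp (tendsto_atTop_add_const_right atTop t tendsto_id)
    refine le_of_tendsto htend ?_
    filter_upwards [eventually_gt_atTop (0 : ℝ)] with s hs
    have hb : ‖f (s + t)‖ ≤ ‖T (s + t) x‖ := hfle (s + t)
    rw [hsemi s t hs ht] at hb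
    calc ‖f (s + t)‖ ≤ ‖T s (T t x)‖ := hb
      _ ≤ ‖T s‖ * ‖T t x‖ := ContinuousLinearMap.le_opNorm _ _
      _ ≤ 1 * ‖T t x‖ := mul_le_mul_of_nonneg_right (hcontr s hs) (norm_nonneg _)
      _ = ‖T t x‖ := one_mul _
  -- the nearest unit multiple of x
  set α : ℝ → ℂ := fun t => if f t = 0 then 1 else f t / ‖f t‖ with hα_def
  have hαnorm : ∀ t : ℝ, ‖α t‖ = 1 := by
    intro t
    by_cases h : f t = 0
    · simp [hα_def, h]
    · have h' : ‖f t‖ ≠ 0 := norm_ne_zero_iff.mpr h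
      simp only [hα_def, if_neg h]
      rw [norm_div, Complex.norm_real, norm_norm, div_self h']
  have hαf : ∀ t : ℝ, (starRingEnd ℂ) (α t) * f t = (‖f t‖ : ℂ) := by
    intro t
    by_cases h : f t = 0
    · simp [hα_def, h]
    · have h' : (‖f t‖ : ℂ) ≠ 0 := by
        simp only [ne_eq, Complex.ofReal_eq_zero, norm_eq_zero]; exact h
      simp only [hα_def, if_neg h]
      rw [map_div₀, Complex.conj_ofReal]
      rw [div_mul_eq_mul_div, mul_comm, Complex.mul_conj]
      rw [Complex.normSq_eq_norm_sq]
      push_cast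
      rw [sq, mul_div_assoc, div_self h', mul_one]
  have hαf' : ∀ t : ℝ, α t * (starRingEnd ℂ) (f t) = (‖f t‖ : ℂ) := by
    intro t
    have h2 := congrArg (starRingEnd ℂ) (hαf t)
    simpa [map_mul, Complex.conj_conj, Complex.conj_ofReal, mul_comm] using h2
  -- inner product with unit multiples of x
  have hinner_smul : ∀ t : ℝ, ∀ c : ℂ, (inner ℂ (T t x) (c • x) : ℂ) = c * (starRingEnd ℂ) (f t) := by
    intro t c
    have hfeq : f t = (inner ℂ x (T t x) : ℂ) := rfl
    rw [inner_smul_right, hfeq, inner_conj_symm ((T t) x) x]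
  -- distance to unit multiple of x
  have hDsq : ∀ t : ℝ, 0 < t → ‖T t x - α t • x‖ ^ 2 = 2 - 2 * ‖f t‖ := by
    intro t ht
    rw [norm_sub_sq (𝕜 := ℂ), hnorm t ht, norm_smul, hαnorm, hx, hinner_smul, hαf']
    norm_num
    ring
  -- key inequality
  have hkey : ∀ t s : ℝ, 0 < t → 0 < s →
      2 - 2 * ‖f t‖ ≤ (‖T (s + t) x - α (s + t) • x‖ + ‖T s x - α s • x‖) ^ 2 := by
    intro t s ht hs
    set γ : ℂ := α (s + t) * (starRingEnd ℂ) (α s) with hγ_def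
    have hγnorm : ‖γ‖ = 1 := by
      rw [hγ_def, norm_mul, hαnorm, RCLike.norm_conj, hαnorm, one_mul]
    have hTsTtx : ‖T s (T t x)‖ = 1 := by
      have : T s (T t x) = T (s + t) x := by rw [hsemi s t hs ht]; rfl
      rw [this]; exact hnorm _ (by linarith)
    -- lower bound for the distance to γ • x
    have hlow : 2 - 2 * ‖f t‖ ≤ ‖T t x - γ • x‖ ^ 2 := by
      rw [norm_sub_sq (𝕜 := ℂ), hnorm t ht, norm_smul, hγnorm, hx, hinner_smul]
      have hre : RCLike.re (γ * (starRingEnd ℂ) (f t)) ≤ ‖f t‖ := by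
        calc RCLike.re (γ * (starRingEnd ℂ) (f t)) ≤ ‖γ * (starRingEnd ℂ) (f t)‖ :=
              RCLike.re_le_norm _
          _ = ‖f t‖ := by rw [norm_mul, hγnorm, RCLike.norm_conj, one_mul]
      nlinarith
    -- T s acts isometrically here
    have hiso : ‖T t x - γ • x‖ = ‖T s (T t x) - γ • T s x‖ := by
      have hpres : (inner ℂ (T s (T t x)) (T s x) : ℂ) = inner ℂ (T t x) x := by
        apply contraction_inner_preserved (T s) (hcontr s hs) (T t x) _ x
        rw [hTsTtx, hnorm t ht]
      have hsq : ‖T t x - γ • x‖ ^ 2 = ‖T s (T t x) - γ • T s x‖ ^ 2 := by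
        rw [norm_sub_sq (𝕜 := ℂ), norm_sub_sq (𝕜 := ℂ), hTsTtx, hnorm t ht,
          norm_smul, norm_smul, hγnorm, hx, hnorm s hs, inner_smul_right, inner_smul_right,
          hpres]
      have h1 : (0:ℝ) ≤ ‖T t x - γ • x‖ := norm_nonneg _
      have h2 : (0:ℝ) ≤ ‖T s (T t x) - γ • T s x‖ := norm_nonneg _
      nlinarith
    -- triangle inequality step
    have htri : ‖T s (T t x) - γ • T s x‖ ≤
        ‖T (s + t) x - α (s + t) • x‖ + ‖T s x - α s • x‖ := by
      have e1 : T s (T t x) = T (s + t) x := by rw [hsemi s t hs ht]; rfl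
      have e2 : ‖α (s + t) • x - γ • T s x‖ = ‖T s x - α s • x‖ := by
        have e3 : α (s + t) • x - γ • T s x
            = α (s + t) • (x - (starRingEnd ℂ) (α s) • T s x) := by
          rw [smul_sub, smul_smul, hγ_def]
        have e4 : α s • (x - (starRingEnd ℂ) (α s) • T s x) = α s • x - T s x := by
          rw [smul_sub, smul_smul, Complex.mul_conj]
          have : Complex.normSq (α s) = 1 := by
            rw [Complex.normSq_eq_norm_sq, hαnorm]; norm_num
          rw [this]; norm_num
        calc ‖α (s + t) • x - γ • T s x‖
            = ‖α (s + t)‖ * ‖x - (starRingEnd ℂ) (α s) • T s x‖ := by rw [e3, norm_smul]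
          _ = ‖x - (starRingEnd ℂ) (α s) • T s x‖ := by rw [hαnorm, one_mul]
          _ = ‖α s‖ * ‖x - (starRingEnd ℂ) (α s) • T s x‖ := by rw [hαnorm, one_mul]
          _ = ‖α s • x - T s x‖ := by rw [← norm_smul, e4]
          _ = ‖T s x - α s • x‖ := norm_sub_rev _ _
      calc ‖T s (T t x) - γ • T s x‖
          ≤ ‖T s (T t x) - α (s + t) • x‖ + ‖α (s + t) • x - γ • T s x‖ :=
            norm_sub_le_norm_sub_add_norm_sub _ _ _
        _ = ‖T (s + t) x - α (s + t) • x‖ + ‖T s x - α s • x‖ := by rw [e1, e2]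
    calc 2 - 2 * ‖f t‖ ≤ ‖T t x - γ • x‖ ^ 2 := hlow
      _ = ‖T s (T t x) - γ • T s x‖ ^ 2 := by rw [hiso]
      _ ≤ (‖T (s + t) x - α (s + t) • x‖ + ‖T s x - α s • x‖) ^ 2 := by
          apply pow_le_pow_left₀ (norm_nonneg _) htri
  -- Step 2 : ‖f t‖ = 1
  have hDlim : Tendsto (fun s : ℝ => ‖T s x - α s • x‖) atTop (𝓝 0) := by
    have h1 : Tendsto (fun s : ℝ => Real.sqrt (2 - 2 * ‖f s‖)) atTop (𝓝 0) := by
      have h2 : Tendsto (fun s : ℝ => 2 - 2 * ‖f s‖) atTop (𝓝 0) := by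
        have := (tendsto_const_nhds (x := (2:ℝ))).sub (hlim'.const_mul 2)
        norm_num at this
        exact this
      have := (Real.continuous_sqrt.tendsto 0).comp h2
      rwa [Real.sqrt_zero] at this
    apply h1.congr'
    filter_upwards [eventually_gt_atTop (0 : ℝ)] with s hs
    rw [← hDsq s hs, Real.sqrt_sq (norm_nonneg _)]
  have hmod : ∀ t : ℝ, 0 < t → ‖f t‖ = 1 := by
    intro t ht
    have h1 : Tendsto (fun s : ℝ =>
        (‖T (s + t) x - α (s + t) • x‖ + ‖T s x - α s • x‖) ^ 2) atTop (𝓝 0) := by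
      have h2 : Tendsto (fun s : ℝ => ‖T (s + t) x - α (s + t) • x‖) atTop (𝓝 0) :=
        hDlim.comp (tendsto_atTop_add_const_right atTop t tendsto_id)
      have h3 := (h2.add hDlim).pow 2
      norm_num at h3
      exact h3
    have h4 : 2 - 2 * ‖f t‖ ≤ 0 := by
      refine ge_of_tendsto h1 ?_
      filter_upwards [eventually_gt_atTop (0 : ℝ)] with s hs
      exact hkey t s ht hs
    have h5 : ‖f t‖ ≤ 1 := by rw [← hnorm t ht]; exact hfle t
    linarith
  -- Step 3 : eigenvector property
  have heig : ∀ t : ℝ, 0 < t → T t x = f t • x := by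
    intro t ht
    have hc1 : f t * (starRingEnd ℂ) (f t) = 1 := by
      rw [Complex.mul_conj, Complex.normSq_eq_norm_sq, hmod t ht]
      norm_num
    have h1 : ‖T t x - f t • x‖ ^ 2 = 0 := by
      rw [norm_sub_sq (𝕜 := ℂ), hnorm t ht, norm_smul, hx, hmod t ht, hinner_smul, hc1]
      norm_num
    have h2 : ‖T t x - f t • x‖ = 0 := by
      have := sq_nonneg ‖T t x - f t • x‖
      nlinarith [norm_nonneg (T t x - f t • x)]
    rw [← sub_eq_zero]
    exact norm_eq_zero.mp h2
  have hfeq : ∀ u : ℝ, f u = (inner ℂ x (T u x) : ℂ) := fun u => rfl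
  -- multiplicativity
  have hmul : ∀ s t : ℝ, 0 < s → 0 < t → f (s + t) = f s * f t := by
    intro s t hs ht
    rw [hfeq (s + t), hsemi s t hs ht]
    show (inner ℂ x (T s (T t x)) : ℂ) = f s * f t
    rw [heig t ht, map_smul, inner_smul_right, ← hfeq s]
    ring
  -- limit at 0⁺
  have hf0 : Tendsto f (𝓝[>] (0 : ℝ)) (𝓝 1) := by
    have h1 : Tendsto (fun u : ℝ => (inner ℂ x (T u x) : ℂ)) (𝓝[>] (0:ℝ)) (𝓝 (inner ℂ x x : ℂ)) :=
      Filter.Tendsto.inner tendsto_const_nhds (hcont x)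
    have h2 : (inner ℂ x x : ℂ) = 1 := by
      rw [inner_self_eq_norm_sq_to_K, hx]; norm_num
    rwa [h2] at h1
  -- Lipschitz-type estimate
  have hstep : ∀ a b : ℝ, 0 < b → b < a → ‖f a - f b‖ ≤ ‖T (a - b) x - x‖ := by
    intro a b hb hab
    have hab' : 0 < a - b := by linarith
    have h1 : T a x = T b (T (a - b) x) := by
      have e : a = b + (a - b) := by ring
      calc T a x = T (b + (a - b)) x := by rw [← e]
        _ = T b (T (a - b) x) := by rw [hsemi b (a - b) hb hab']; rfl
    have h2 : f a - f b = (inner ℂ x (T b (T (a - b) x - x)) : ℂ) := by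
      rw [hfeq a, hfeq b, h1, map_sub, inner_sub_right]
    rw [h2]
    calc ‖(inner ℂ x (T b (T (a - b) x - x)) : ℂ)‖ ≤ ‖x‖ * ‖T b (T (a - b) x - x)‖ :=
          norm_inner_le_norm _ _
      _ = ‖T b (T (a - b) x - x)‖ := by rw [hx, one_mul]
      _ ≤ ‖T b‖ * ‖T (a - b) x - x‖ := ContinuousLinearMap.le_opNorm _ _
      _ ≤ 1 * ‖T (a - b) x - x‖ := mul_le_mul_of_nonneg_right (hcontr b hb) (norm_nonneg _)
      _ = ‖T (a - b) x - x‖ := one_mul _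
  -- continuity on (0, ∞)
  have hfc : ∀ t : ℝ, 0 < t → ContinuousWithinAt f (Set.Ioi 0) t := by
    intro t ht
    rw [Metric.continuousWithinAt_iff]
    intro ε hε
    have h1 := hcont x
    rw [Metric.tendsto_nhdsWithin_nhds] at h1
    obtain ⟨δ₁, hδ₁, h2⟩ := h1 ε hε
    refine ⟨δ₁, hδ₁, ?_⟩
    intro u hu hud
    have hu' : 0 < u := hu
    rw [Real.dist_eq] at hud
    rcases lt_trichotomy u t with h | h | h
    · have h3 := hstep t u hu' h
      have h4 : dist (T (t - u) x) x < ε := by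
        apply h2 (show t - u ∈ Set.Ioi 0 by simp only [Set.mem_Ioi]; linarith)
        rw [Real.dist_eq, sub_zero, abs_of_pos (by linarith : (0:ℝ) < t - u)]
        calc t - u ≤ |u - t| := by rw [abs_sub_comm]; exact le_abs_self _
          _ < δ₁ := hud
      rw [dist_eq_norm, norm_sub_rev]
      rw [dist_eq_norm] at h4
      exact lt_of_le_of_lt h3 h4
    · rw [h]; simpa using hε
    · have h3 := hstep u t ht h
      have h4 : dist (T (u - t) x) x < ε := by
        apply h2 (show u - t ∈ Set.Ioi 0 by simp only [Set.mem_Ioi]; linarith)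
        rw [Real.dist_eq, sub_zero, abs_of_pos (by linarith : (0:ℝ) < u - t)]
        calc u - t ≤ |u - t| := le_abs_self _
          _ < δ₁ := hud
      rw [dist_eq_norm]
      rw [dist_eq_norm] at h4
      exact lt_of_le_of_lt h3 h4
  -- choose δ > 0 with Re (f u) > 0 on (0, δ]
  obtain ⟨δ, hδpos, hδre⟩ : ∃ δ : ℝ, 0 < δ ∧ ∀ u : ℝ, 0 < u → u ≤ δ → 0 < (f u).re := by
    have h1 := hf0
    rw [Metric.tendsto_nhdsWithin_nhds] at h1
    obtain ⟨ε, hε, h2⟩ := h1 (1/2) (by norm_num)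
    refine ⟨ε/2, by linarith, ?_⟩
    intro u hu hud
    have h3 := h2 (show u ∈ Set.Ioi 0 from hu)
      (by rw [Real.dist_eq, sub_zero, abs_of_pos hu]; linarith)
    rw [dist_eq_norm] at h3
    have h4 : |(f u - 1).re| ≤ ‖f u - 1‖ := by
      exact Complex.abs_re_le_norm _
    have h5 : (f u - 1).re = (f u).re - 1 := by simp
    rw [h5] at h4
    have h6 : |(f u).re - 1| < 1/2 := lt_of_le_of_lt h4 h3
    have h7 := abs_lt.mp h6
    linarith [h7.1]
  set θ : ℝ → ℝ := fun u => (f u).arg with hθ_def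
  have hfne : ∀ u : ℝ, 0 < u → f u ≠ 0 := by
    intro u hu h0
    have := hmod u hu
    rw [h0] at this
    simp at this
  have hθlt : ∀ u : ℝ, 0 < u → u ≤ δ → |θ u| < Real.pi / 2 := by
    intro u hu hud
    exact Complex.abs_arg_lt_pi_div_two_iff.mpr (Or.inl (hδre u hu hud))
  have hθadd : ∀ a b : ℝ, 0 < a → 0 < b → a + b ≤ δ → θ (a + b) = θ a + θ b := by
    intro a b ha hb hab
    show (f (a + b)).arg = (f a).arg + (f b).arg
    rw [hmul a b ha hb]
    apply Complex.arg_mul (hfne a ha) (hfne b hb)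
    have h1 := hθlt a ha (by linarith)
    have h2 := hθlt b hb (by linarith)
    have h1' := abs_lt.mp h1
    have h2' := abs_lt.mp h2
    constructor
    · linarith [h1'.1, h2'.1]
    · linarith [h1'.2, h2'.2]
  -- iteration of additivity
  have hθnat : ∀ (k : ℕ) (u : ℝ), 0 < u → ((k:ℝ) + 1) * u ≤ δ →
      θ (((k:ℝ) + 1) * u) = ((k:ℝ) + 1) * θ u := by
    intro k
    induction k with
    | zero => intro u hu h; norm_num
    | succ n ih =>
      intro u hu h
      have hn : (0:ℝ) ≤ (n:ℝ) := Nat.cast_nonneg n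
      have h1 : ((n:ℝ) + 1) * u ≤ δ := by push_cast at h; nlinarith
      have e : ((↑(n+1):ℝ) + 1) * u = ((n:ℝ) + 1) * u + u := by push_cast; ring
      rw [e, hθadd (((n:ℝ) + 1) * u) u (by positivity) hu (by rw [← e]; exact h),
        ih u hu h1]
      push_cast; ring
  have hθnat' : ∀ (k : ℕ), 1 ≤ k → ∀ u : ℝ, 0 < u → (k:ℝ) * u ≤ δ →
      θ ((k:ℝ) * u) = (k:ℝ) * θ u := by
    intro k hk u hu h
    obtain ⟨j, rfl⟩ := Nat.exists_eq_add_of_le hk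
    have e : ((1 + j : ℕ):ℝ) = (j:ℝ) + 1 := by push_cast; ring
    rw [e] at h ⊢
    exact hθnat j u hu h
  -- dyadic values
  have hθdy : ∀ n : ℕ, θ (δ / 2 ^ n) = θ δ / 2 ^ n := by
    intro n
    have h2n : (0:ℝ) < 2 ^ n := by positivity
    have hu : 0 < δ / 2 ^ n := by positivity
    have e : ((2 ^ n : ℕ):ℝ) * (δ / 2 ^ n) = δ := by push_cast; field_simp
    have key := hθnat' (2 ^ n) (Nat.one_le_two_pow) (δ / 2 ^ n) hu (by rw [e])
    rw [e] at key
    rw [key]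
    push_cast
    field_simp
  -- linearity of θ on (0, δ]
  have hθlin : ∀ u : ℝ, 0 < u → u ≤ δ → θ u = (θ δ / δ) * u := by
    intro u hu hud
    set g : ℕ → ℝ := fun n => ((Nat.ceil ((2 ^ n * u) / δ) : ℕ):ℝ) * (δ / 2 ^ n) with hg_def
    have hk1 : ∀ n : ℕ, 1 ≤ Nat.ceil ((2 ^ n * u) / δ) := by
      intro n
      apply Nat.one_le_ceil_iff.mpr
      positivity
    have hkle : ∀ n : ℕ, (Nat.ceil ((2 ^ n * u) / δ) : ℕ) ≤ 2 ^ n := by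
      intro n
      apply Nat.ceil_le.mpr
      push_cast
      rw [div_le_iff₀ hδpos]
      have h2n : (0:ℝ) < 2 ^ n := by positivity
      nlinarith
    have hgpos : ∀ n : ℕ, 0 < g n := by
      intro n
      have h1 : (0:ℝ) < ((Nat.ceil ((2 ^ n * u) / δ) : ℕ):ℝ) := by
        have := hk1 n
        exact_mod_cast Nat.lt_of_lt_of_le Nat.zero_lt_one this
      have h2 : (0:ℝ) < δ / 2 ^ n := by positivity
      have e : g n = ((Nat.ceil ((2 ^ n * u) / δ) : ℕ):ℝ) * (δ / 2 ^ n) := rfl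
      rw [e]
      exact mul_pos h1 h2
    have hgle : ∀ n : ℕ, g n ≤ δ := by
      intro n
      have h1 : ((Nat.ceil ((2 ^ n * u) / δ) : ℕ):ℝ) ≤ (2:ℝ) ^ n := by
        exact_mod_cast hkle n
      have h2 : (0:ℝ) < 2 ^ n := by positivity
      rw [hg_def]
      calc ((Nat.ceil ((2 ^ n * u) / δ) : ℕ):ℝ) * (δ / 2 ^ n) ≤ (2:ℝ) ^ n * (δ / 2 ^ n) := by
            apply mul_le_mul_of_nonneg_right h1 (le_of_lt (by positivity))
        _ = δ := by field_simp
    have hθg : ∀ n : ℕ, θ (g n) = (θ δ / δ) * g n := by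
      intro n
      have h2n : (0:ℝ) < 2 ^ n := by positivity
      have hu2 : 0 < δ / 2 ^ n := by positivity
      have h1 : θ (g n) = ((Nat.ceil ((2 ^ n * u) / δ) : ℕ):ℝ) * θ (δ / 2 ^ n) := by
        apply hθnat' _ (hk1 n) _ hu2
        exact hgle n
      rw [h1, hθdy n, hg_def]
      field_simp
    have hdiv2 : Tendsto (fun n : ℕ => δ / 2 ^ n) atTop (𝓝 0) := by
      have h1 : Tendsto (fun n : ℕ => ((1:ℝ)/2) ^ n) atTop (𝓝 0) := by
        apply tendsto_pow_atTop_nhds_zero_of_lt_one (by norm_num) (by norm_num)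
      have h2 := h1.const_mul δ
      rw [mul_zero] at h2
      apply h2.congr
      intro n
      rw [div_pow, one_pow]
      ring
    have hgtend : Tendsto g atTop (𝓝 u) := by
      have hlow : ∀ n : ℕ, u ≤ g n := by
        intro n
        have h1 : (2 ^ n * u) / δ ≤ ((Nat.ceil ((2 ^ n * u) / δ) : ℕ):ℝ) := Nat.le_ceil _
        have h2n : (0:ℝ) < 2 ^ n := by positivity
        rw [hg_def]
        rw [div_le_iff₀ hδpos] at h1
        calc u = ((2 ^ n * u) / δ) * (δ / 2 ^ n) := by field_simp
          _ ≤ ((Nat.ceil ((2 ^ n * u) / δ) : ℕ):ℝ) * (δ / 2 ^ n) := by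
              apply mul_le_mul_of_nonneg_right (Nat.le_ceil _) (le_of_lt (by positivity))
    
      have hhigh : ∀ n : ℕ, g n ≤ u + δ / 2 ^ n := by
        intro n
        have h2n : (0:ℝ) < 2 ^ n := by positivity
        have h1 : ((Nat.ceil ((2 ^ n * u) / δ) : ℕ):ℝ) < (2 ^ n * u) / δ + 1 :=
          Nat.ceil_lt_add_one (by positivity)
        rw [hg_def]
        calc ((Nat.ceil ((2 ^ n * u) / δ) : ℕ):ℝ) * (δ / 2 ^ n)
            ≤ ((2 ^ n * u) / δ + 1) * (δ / 2 ^ n) := by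
              apply mul_le_mul_of_nonneg_right (le_of_lt h1) (le_of_lt (by positivity))
          _ = u + δ / 2 ^ n := by field_simp
      have hupper : Tendsto (fun n : ℕ => u + δ / 2 ^ n) atTop (𝓝 u) := by
        have := (tendsto_const_nhds (x := u) (f := atTop (α := ℕ))).add hdiv2
        rw [add_zero] at this
        exact this
      exact tendsto_of_tendsto_of_tendsto_of_le_of_le tendsto_const_nhds hupper hlow hhigh
    have hcw : ContinuousWithinAt θ (Set.Ioi 0) u := by
      have harg : ContinuousAt Complex.arg (f u) :=
        Complex.continuousAt_arg (Complex.mem_slitPlane_iff.mpr (Or.inl (hδre u hu hud)))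
      exact harg.comp_continuousWithinAt (hfc u hu)
    have h2 : Tendsto (θ ∘ g) atTop (𝓝 (θ u)) := by
      apply hcw.tendsto.comp
      rw [tendsto_nhdsWithin_iff]
      exact ⟨hgtend, Eventually.of_forall (fun n => hgpos n)⟩
    have h3 : Tendsto (θ ∘ g) atTop (𝓝 ((θ δ / δ) * u)) := by
      have e : θ ∘ g = fun n => (θ δ / δ) * g n := funext hθg
      rw [e]
      exact hgtend.const_mul _
    exact tendsto_nhds_unique h2 h3
  -- exponential form on (0, δ]
  have hexp : ∀ u : ℝ, 0 < u → u ≤ δ →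
      f u = Complex.exp (Complex.I * ((θ δ / δ : ℝ):ℂ) * (u:ℂ)) := by
    intro u hu hud
    have h1 : f u = Complex.exp (((θ u : ℝ):ℂ) * Complex.I) := by
      have h2 := Complex.norm_mul_exp_arg_mul_I (f u)
      have h3 : ‖f u‖ = 1 := by
        exact hmod u hu
      rw [h3] at h2
      rw [← h2, Complex.ofReal_one, one_mul]
    rw [h1, hθlin u hu hud]
    congr 1
    push_cast
    ring
  -- powers
  have hpow : ∀ (k : ℕ), 1 ≤ k → ∀ u : ℝ, 0 < u → f ((k:ℝ) * u) = f u ^ k := by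
    intro k hk
    induction k with
    | zero => omega
    | succ n ih =>
      intro u hu
      rcases Nat.eq_or_lt_of_le hk with h | h
      · rw [← h]; norm_num
      · have hn : 1 ≤ n := by omega
        have e : ((↑(n+1):ℝ)) * u = (n:ℝ) * u + u := by push_cast; ring
        have hnu : 0 < (n:ℝ) * u := by
          have : (1:ℝ) ≤ (n:ℝ) := by exact_mod_cast hn
          nlinarith
        rw [e, hmul ((n:ℝ) * u) u hnu hu, ih hn u hu]
        ring
  -- conclusion
  refine ⟨θ δ / δ, ?_⟩
  intro t ht
  set m : ℕ := Nat.ceil (t / δ) with hm_def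
  have hm1 : 1 ≤ m := Nat.one_le_ceil_iff.mpr (by positivity)
  have hmR : (1:ℝ) ≤ (m:ℝ) := by exact_mod_cast hm1
  have hmpos : (0:ℝ) < (m:ℝ) := by linarith
  have htm : 0 < t / (m:ℝ) := by positivity
  have htmd : t / (m:ℝ) ≤ δ := by
    rw [div_le_iff₀ hmpos]
    have h1 : t / δ ≤ (m:ℝ) := Nat.le_ceil _
    rw [div_le_iff₀ hδpos] at h1
    linarith
  have hft : f t = Complex.exp (Complex.I * ((θ δ / δ : ℝ):ℂ) * (t:ℂ)) := by
    have e : t = (m:ℝ) * (t / (m:ℝ)) := by field_simp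
    have h1 : f t = f (t / (m:ℝ)) ^ m := by
      conv_lhs => rw [e]
      exact hpow m hm1 (t / (m:ℝ)) htm
    rw [h1, hexp (t / (m:ℝ)) htm htmd, ← Complex.exp_nat_mul]
    congr 1
    have e2 : ((t / (m:ℝ) : ℝ):ℂ) = (t:ℂ) / (m:ℂ) := by push_cast; ring
    rw [e2]
    have hmC : ((m:ℕ):ℂ) ≠ 0 := by
      simp only [ne_eq, Nat.cast_eq_zero]
      omega
    rw [mul_comm, mul_assoc, div_mul_cancel₀ _ hmC]
  rw [heig t ht, hft]
end

section
/- Let X be a complex Banach space, let (T_t)_{t>0} be a C₀ contraction semigroup on X, and let x ∈ X be a unit vector. If there exists x* ∈ X* with ‖x*‖ = 1 and ⟨x, x*⟩ = 1 such that lim_{t→∞} |⟨T_t x, x*⟩| = 1, then there exists y* ∈ X* with ‖y*‖ = 1 and ⟨x, y*⟩ = 1 such that |⟨T_t x, y*⟩| = 1 for all t > 0. -/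
open Filter Topology

private lemma mapClusterPt_eq_of_tendsto {α ι : Type*} [TopologicalSpace α] [T2Space α]
    {F : Filter ι} [NeBot F] {u : ι → α} {a b : α}
    (h : MapClusterPt b F u) (ht : Tendsto u F (𝓝 a)) : b = a := by
  have hne : NeBot (𝓝 b ⊓ Filter.map u F) := h
  exact eq_of_nhds_neBot (neBot_of_le (inf_le_inf_left _ ht))

set_option maxHeartbeats 1000000 in
/-- If `(T_t)_{t>0}` is a `C₀` contraction semigroup on a complex Banach space `X`, `x` a unit
vector, and `x* ∈ J(x)` satisfies `lim_{t→∞} |⟨T_t x, x*⟩| = 1`, then there is `y* ∈ J(x)` with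
`|⟨T_t x, y*⟩| = 1` for all `t > 0`. -/
theorem contraction_semigroup_duality_limit
    {X : Type*} [NormedAddCommGroup X] [NormedSpace ℂ X] [CompleteSpace X]
    (T : ℝ → X →L[ℂ] X)
    (hsemi : ∀ s t : ℝ, 0 < s → 0 < t → T (s + t) = (T s).comp (T t))
    (hcont : ∀ x : X, Tendsto (fun t => T t x) (𝓝[>] (0 : ℝ)) (𝓝 x))
    (hcontr : ∀ t : ℝ, 0 < t → ‖T t‖ ≤ 1)
    (x : X) (hx : ‖x‖ = 1)
    (xstar : X →L[ℂ] ℂ) (hxstar_norm : ‖xstar‖ = 1) (hxstar_x : xstar x = 1)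
    (hlim : Tendsto (fun t : ℝ => ‖xstar (T t x)‖) atTop (𝓝 1)) :
    ∃ ystar : X →L[ℂ] ℂ, ‖ystar‖ = 1 ∧ ystar x = 1 ∧
      ∀ t : ℝ, 0 < t → ‖ystar (T t x)‖ = 1 := by
  classical
  set c : ℝ → ℂ := fun t => xstar (T t x) with hc
  set u : ℝ → ℂ := fun t => (starRingEnd ℂ) (c t) / (‖c t‖ : ℂ) with hu
  set ψ : ℝ → StrongDual ℂ X := fun t => u t • (xstar.comp (T t)) with hψ
  have hψ_apply : ∀ t (v : X), ψ t v = u t * xstar (T t v) := by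
    intro t v
    simp [hψ, ContinuousLinearMap.smul_apply, ContinuousLinearMap.comp_apply, smul_eq_mul]
  -- eventual facts
  have hev_pos : ∀ᶠ t in (atTop : Filter ℝ), 0 < t := eventually_gt_atTop 0
  have hev_ne : ∀ᶠ t in (atTop : Filter ℝ), c t ≠ 0 := by
    have : ∀ᶠ t in (atTop : Filter ℝ), (1:ℝ)/2 < ‖c t‖ :=
      hlim.eventually (eventually_gt_nhds (by norm_num))
    filter_upwards [this] with t ht hzero
    rw [hzero] at ht; simp at ht; linarith
  have hu_norm : ∀ t, c t ≠ 0 → ‖u t‖ = 1 := by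
    intro t htne
    have hcn : ‖c t‖ ≠ 0 := norm_ne_zero_iff.mpr htne
    have : ‖u t‖ = ‖(starRingEnd ℂ) (c t)‖ / ‖((‖c t‖ : ℝ) : ℂ)‖ := by
      rw [hu]; exact norm_div _ _
    rw [this, RCLike.norm_conj, Complex.norm_real, Real.norm_eq_abs,
      abs_of_nonneg (norm_nonneg (c t)), div_self hcn]
  have hψ_norm : ∀ᶠ t in (atTop : Filter ℝ), ‖ψ t‖ ≤ 1 := by
    filter_upwards [hev_pos, hev_ne] with t htpos htne
    have h1 : ‖ψ t‖ = ‖u t‖ * ‖xstar.comp (T t)‖ := norm_smul _ _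
    rw [h1, hu_norm t htne, one_mul]
    calc ‖xstar.comp (T t)‖ ≤ ‖xstar‖ * ‖T t‖ := ContinuousLinearMap.opNorm_comp_le _ _
      _ ≤ 1 * 1 := by
          rw [hxstar_norm]; exact mul_le_mul_of_nonneg_left (hcontr t htpos) zero_le_one
      _ = 1 := one_mul 1
  -- the filter in the weak dual
  set Φ : ℝ → WeakDual ℂ X := fun t => StrongDual.toWeakDual (ψ t) with hΦ
  have hKcompact : IsCompact (WeakDual.toStrongDual ⁻¹'
      Metric.closedBall (0 : StrongDual ℂ X) 1) :=
    WeakDual.isCompact_closedBall (𝕜 := ℂ) (0 : StrongDual ℂ X) 1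
  have hle : Filter.map Φ atTop ≤ 𝓟 (WeakDual.toStrongDual ⁻¹'
      Metric.closedBall (0 : StrongDual ℂ X) 1) := by
    rw [le_principal_iff, mem_map]
    filter_upwards [hψ_norm] with t ht
    show WeakDual.toStrongDual (Φ t) ∈ Metric.closedBall (0 : StrongDual ℂ X) 1
    rw [Metric.mem_closedBall, dist_zero_right]
    exact ht
  obtain ⟨y, hy_mem, hy_cl⟩ := hKcompact hle
  set ystar : X →L[ℂ] ℂ := WeakDual.toStrongDual y with hystar
  have hy_norm_le : ‖ystar‖ ≤ 1 := by
    have := hy_mem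
    rw [Set.mem_preimage, Metric.mem_closedBall, dist_zero_right] at this
    exact this
  -- cluster points of evaluations
  have hcluster : ∀ v : X, MapClusterPt (ystar v) atTop (fun t => ψ t v) := by
    intro v
    have hev : ContinuousAt (fun w : WeakDual ℂ X => w v) y :=
      (WeakDual.eval_continuous v).continuousAt
    exact MapClusterPt.continuousAt_comp hev hy_cl
  -- value at x
  have hψx : ∀ t, c t ≠ 0 → ψ t x = (‖c t‖ : ℂ) := by
    intro t htne
    have hcnC : ((‖c t‖ : ℝ) : ℂ) ≠ 0 := by
      simpa using norm_ne_zero_iff.mpr htne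
    rw [hψ_apply t x]
    have hcx : xstar (T t x) = c t := rfl
    rw [hcx, hu]
    rw [div_mul_eq_mul_div, mul_comm ((starRingEnd ℂ) (c t)) (c t), Complex.mul_conj,
      Complex.normSq_eq_norm_sq, sq, Complex.ofReal_mul,
      mul_div_assoc, div_self hcnC, mul_one]
  have htend_x : Tendsto (fun t => ψ t x) atTop (𝓝 (1 : ℂ)) := by
    have h1 : Tendsto (fun t : ℝ => ((‖c t‖ : ℝ) : ℂ)) atTop (𝓝 ((1:ℝ) : ℂ)) :=
      (Complex.continuous_ofReal.tendsto 1).comp hlim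
    have h2 : (fun t : ℝ => ((‖c t‖ : ℝ) : ℂ)) =ᶠ[atTop] (fun t => ψ t x) := by
      filter_upwards [hev_ne] with t htne
      exact (hψx t htne).symm
    simpa using h1.congr' h2
  have hyx : ystar x = 1 := mapClusterPt_eq_of_tendsto (hcluster x) htend_x
  have hy_norm : ‖ystar‖ = 1 := by
    refine le_antisymm hy_norm_le ?_
    have := ystar.le_opNorm x
    rw [hyx, hx, mul_one] at this
    simpa using this
  refine ⟨ystar, hy_norm, hyx, ?_⟩
  intro s hs
  have htend_s : Tendsto (fun t => ‖ψ t (T s x)‖) atTop (𝓝 (1 : ℝ)) := by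
    have h1 : Tendsto (fun t : ℝ => ‖xstar (T (t + s) x)‖) atTop (𝓝 1) :=
      hlim.comp (tendsto_atTop_add_const_right _ s tendsto_id)
    refine h1.congr' ?_
    filter_upwards [hev_pos, hev_ne] with t htpos htne
    have hTsum : T (t + s) x = T t (T s x) := by
      rw [hsemi t s htpos hs]; rfl
    show ‖xstar (T (t + s) x)‖ = ‖ψ t (T s x)‖
    rw [hψ_apply t (T s x), norm_mul, hu_norm t htne, one_mul, hTsum]
  have hcl2 : MapClusterPt (ystar (T s x)) atTop (fun t => ψ t (T s x)) := hcluster (T s x)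
  have hnormcluster : MapClusterPt ‖ystar (T s x)‖ atTop (fun t => ‖ψ t (T s x)‖) :=
    MapClusterPt.continuousAt_comp (continuous_norm.continuousAt) hcl2
  exact mapClusterPt_eq_of_tendsto hnormcluster htend_s
end

section
/- Let (T_t)_{t>0} be a C₀ semigroup of linear isometries on the complex Banach space ℓ¹ (absolutely summable sequences of complex numbers with the sum norm). Then for every index n there exists a real number ω_n such that T_t e_n = e^{i ω_n t} · e_n for all t > 0, where e_n denotes the n-th standard unit vector of ℓ¹. -/
open Filter Topology

lemma l1_hasSum_norm (f : lp (fun _ : ℕ => ℂ) 1) : HasSum (fun i => ‖f i‖) ‖f‖ := by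
  have h := lp.hasSum_norm (p := 1) (E := fun _ : ℕ => ℂ) (by norm_num) f
  simpa using h

lemma complex_orth {y z : ℂ} (h1 : ‖y + z‖ = ‖y‖ + ‖z‖) (h2 : ‖y - z‖ = ‖y‖ + ‖z‖) :
    y * z = 0 := by
  have sq : ∀ w : ℂ, Complex.normSq w = ‖w‖ ^ 2 := fun w => by
    rw [Complex.sq_norm]
  have e3 : Complex.normSq (y + z) + Complex.normSq (y - z)
      = 2 * Complex.normSq y + 2 * Complex.normSq z := by
    simp only [Complex.normSq_apply, Complex.add_re, Complex.add_im, Complex.sub_re,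
      Complex.sub_im]
    ring
  rw [sq, sq, sq, sq, h1, h2] at e3
  have hy : ‖y‖ * ‖z‖ = 0 := by nlinarith
  rcases mul_eq_zero.mp hy with h | h
  · rw [norm_eq_zero.mp h, zero_mul]
  · rw [norm_eq_zero.mp h, mul_zero]

lemma norm_e (k : ℕ) : ‖lp.single (E := fun _ : ℕ => ℂ) 1 k (1 : ℂ)‖ = 1 := by
  have := lp.norm_single (p := 1) (E := fun _ : ℕ => ℂ) (by norm_num) k (1 : ℂ)
  simpa using this

lemma norm_single_add_smul_single {j k : ℕ} (hjk : j ≠ k) (c : ℂ) (hc : ‖c‖ = 1) :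
    ‖lp.single (E := fun _ : ℕ => ℂ) 1 j (1 : ℂ) + c • lp.single (E := fun _ : ℕ => ℂ) 1 k (1 : ℂ)‖ = 2 := by
  have h := l1_hasSum_norm (lp.single (E := fun _ : ℕ => ℂ) 1 j (1 : ℂ) + c • lp.single (E := fun _ : ℕ => ℂ) 1 k (1 : ℂ))
  have hfun : (fun i => ‖(lp.single (E := fun _ : ℕ => ℂ) 1 j (1 : ℂ) + c • lp.single (E := fun _ : ℕ => ℂ) 1 k (1 : ℂ)) i‖)
      = fun i => (if i = j then (1 : ℝ) else 0) + (if i = k then 1 else 0) := by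
    funext i
    have hcoe : (lp.single (E := fun _ : ℕ => ℂ) 1 j (1 : ℂ) + c • lp.single (E := fun _ : ℕ => ℂ) 1 k (1 : ℂ)) i
        = lp.single (E := fun _ : ℕ => ℂ) 1 j (1 : ℂ) i + c * lp.single (E := fun _ : ℕ => ℂ) 1 k (1 : ℂ) i := by
      rw [lp.coeFn_add, Pi.add_apply, lp.coeFn_smul, Pi.smul_apply, smul_eq_mul]
    rw [hcoe]
    by_cases hij : i = j
    · subst hij
      rw [lp.single_apply_self, lp.single_apply_ne 1 k 1 hjk, if_pos rfl, if_neg hjk]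
      simp
    · by_cases hik : i = k
      · subst hik
        rw [lp.single_apply_self, lp.single_apply_ne 1 j 1 hij, if_neg hij, if_pos rfl]
        simpa using hc
      · rw [lp.single_apply_ne 1 j 1 hij, lp.single_apply_ne 1 k 1 hik, if_neg hij, if_neg hik]
        simp
  rw [hfun] at h
  have h2 : HasSum (fun i => (if i = j then (1 : ℝ) else 0) + (if i = k then 1 else 0))
      (1 + 1) := (hasSum_ite_eq j (1 : ℝ)).add (hasSum_ite_eq k (1 : ℝ))
  have := h.unique h2
  rw [this]; norm_num

lemma pointwise_add_eq {Y Z : lp (fun _ : ℕ => ℂ) 1} (h : ‖Y + Z‖ = ‖Y‖ + ‖Z‖) (i : ℕ) :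
    ‖Y i + Z i‖ = ‖Y i‖ + ‖Z i‖ := by
  have hcoe : ∀ i : ℕ, (Y + Z) i = Y i + Z i := fun i => by
    rw [lp.coeFn_add, Pi.add_apply]
  by_contra hne
  have hle : ∀ i : ℕ, ‖(Y + Z) i‖ ≤ ‖Y i‖ + ‖Z i‖ := fun i => by
    rw [hcoe i]; exact norm_add_le _ _
  have hlt : ‖(Y + Z) i‖ < ‖Y i‖ + ‖Z i‖ := by
    rw [hcoe i]; exact lt_of_le_of_ne (norm_add_le _ _) hne
  have h1 := l1_hasSum_norm (Y + Z)
  have h2 := (l1_hasSum_norm Y).add (l1_hasSum_norm Z)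
  have := hasSum_lt hle hlt h1 h2
  rw [h] at this
  exact lt_irrefl _ this

noncomputable def evCLM (k : ℕ) : lp (fun _ : ℕ => ℂ) 1 →L[ℂ] ℂ :=
  LinearMap.mkContinuous
    { toFun := fun f => f k
      map_add' := fun f g => by
        show (f + g) k = f k + g k
        rw [lp.coeFn_add, Pi.add_apply]
      map_smul' := fun c f => by
        show (c • f) k = (RingHom.id ℂ) c • f k
        rw [lp.coeFn_smul, Pi.smul_apply]; rfl }
    1 (fun f => by
      simpa using lp.norm_apply_le_norm (one_ne_zero : (1 : ENNReal) ≠ 0) f k)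

@[simp] lemma evCLM_apply (k : ℕ) (f : lp (fun _ : ℕ => ℂ) 1) : evCLM k f = f k := rfl

lemma additive_linear {a : ℝ → ℝ} {δ : ℝ} (hδ : 0 < δ)
    (hadd : ∀ s t : ℝ, 0 < s → 0 < t → s + t ≤ δ → a (s + t) = a s + a t)
    (hlim : Tendsto a (𝓝[>] (0 : ℝ)) (𝓝 0)) :
    ∀ t : ℝ, 0 < t → t ≤ δ → a t = a δ / δ * t := by
  have hk : ∀ u : ℝ, 0 < u → ∀ m : ℕ, ((m : ℝ) + 1) * u ≤ δ →
      a (((m : ℝ) + 1) * u) = ((m : ℝ) + 1) * a u := by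
    intro u hu m
    induction m with
    | zero => intro _; norm_num
    | succ m ih =>
      intro hle
      have hcast : (((m + 1 : ℕ) : ℝ) + 1) * u = u + ((m : ℝ) + 1) * u := by push_cast; ring
      have hmu : (0 : ℝ) < ((m : ℝ) + 1) * u := by positivity
      have hle' : ((m : ℝ) + 1) * u ≤ δ := by
        push_cast at hle; nlinarith
      rw [hcast, hadd u (((m : ℝ) + 1) * u) hu hmu (by push_cast at hle ⊢; nlinarith), ih hle']
      push_cast; ring
  intro t ht htδ
  set c := a δ / δ with hc
  clear_value c
  have key : ∀ ε : ℝ, 0 < ε → |a t - c * t| ≤ ε := by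
    intro ε hε
    obtain ⟨η, hη, hball⟩ := Metric.tendsto_nhdsWithin_nhds.mp hlim (ε / 2) (by positivity)
    have habs : ∀ u : ℝ, 0 < u → u < η → |a u| < ε / 2 := by
      intro u hu huη
      have := hball (Set.mem_Ioi.mpr hu)
        (by rw [Real.dist_eq, sub_zero, abs_of_pos hu]; exact huη)
      simpa [Real.dist_eq] using this
    obtain ⟨n, hn⟩ := exists_nat_gt (max (δ / η) (|c| * δ / (ε / 2)))
    have hnA : δ / η < (n : ℝ) := lt_of_le_of_lt (le_max_left _ _) hn
    have hnB : |c| * δ / (ε / 2) < (n : ℝ) := lt_of_le_of_lt (le_max_right _ _) hn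
    have hn1 : (0 : ℝ) < (n : ℝ) + 1 := by positivity
    set u := δ / ((n : ℝ) + 1) with hu_def
    clear_value u
    have hupos : 0 < u := by rw [hu_def]; positivity
    have huδ : ((n : ℝ) + 1) * u = δ := by rw [hu_def]; field_simp
    have hδη : δ / η < (n : ℝ) + 1 := by linarith
    have huη : u < η := by
      rw [hu_def, div_lt_iff₀ hn1]
      rw [div_lt_iff₀ hη] at hδη
      nlinarith
    have hcu : |c| * u < ε / 2 := by
      have h1 : |c| * δ / (ε / 2) < (n : ℝ) + 1 := by linarith
      rw [div_lt_iff₀ (by positivity : (0:ℝ) < ε / 2)] at h1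
      have h2 : |c| * u * ((n : ℝ) + 1) = |c| * δ := by rw [hu_def]; field_simp
      nlinarith [abs_nonneg c, mul_pos (by positivity : (0:ℝ) < ε/2) hn1]
    have hau : a u = c * u := by
      have h1 : a δ = ((n : ℝ) + 1) * a u := by
        rw [← huδ]; exact hk u hupos n (le_of_eq huδ)
      have hδne : δ ≠ 0 := ne_of_gt hδ
      have hn1ne : ((n : ℝ) + 1) ≠ 0 := ne_of_gt hn1
      have hune : u ≠ 0 := ne_of_gt hupos
      have hn1ne : ((n : ℝ) + 1) ≠ 0 := ne_of_gt hn1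
      rw [hc, h1, ← huδ]
      field_simp
    -- floor argument
    have hkfl := Nat.floor_le (le_of_lt (div_pos ht hupos))
    have hkfl2 := Nat.lt_floor_add_one (t / u)
    set k := Nat.floor (t / u) with hk_def
    clear_value k
    have hk1 : (k : ℝ) * u ≤ t := by
      calc (k : ℝ) * u ≤ (t / u) * u := by nlinarith
        _ = t := by field_simp
    have hk2 : t < ((k : ℝ) + 1) * u := by
      calc t = (t / u) * u := by field_simp
        _ < ((k : ℝ) + 1) * u := by nlinarith
    rcases Nat.eq_zero_or_pos k with hk0 | hkpos
    · have htu : t < u := by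
        have := hk2; rw [hk0] at this; push_cast at this; linarith
      have h1 : |a t| < ε / 2 := habs t ht (lt_trans htu huη)
      have h2 : |c * t| ≤ |c| * u := by
        rw [abs_mul, abs_of_pos ht]
        exact mul_le_mul_of_nonneg_left (le_of_lt htu) (abs_nonneg c)
      calc |a t - c * t| ≤ |a t| + |c * t| := abs_sub (a t) (c * t)
        _ ≤ ε := by linarith
    · obtain ⟨m, hm⟩ : ∃ m : ℕ, k = m + 1 := ⟨k - 1, (Nat.succ_pred_eq_of_pos hkpos).symm⟩
      have hkuδ : (k : ℝ) * u ≤ δ := le_trans hk1 htδ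
      have hkpos' : (0 : ℝ) < (k : ℝ) * u := by
        have : (0:ℝ) < (k:ℝ) := by exact_mod_cast hkpos
        positivity
      have hak : a ((k : ℝ) * u) = (k : ℝ) * a u := by
        rw [hm] at hkuδ ⊢; push_cast at hkuδ ⊢; exact hk u hupos m hkuδ
      rcases eq_or_lt_of_le hk1 with heq | hlt
      · rw [← heq, hak, hau]
        have : (k : ℝ) * (c * u) - c * ((k : ℝ) * u) = 0 := by ring
        rw [this, abs_zero]
        linarith
      · set r := t - (k : ℝ) * u with hr
        clear_value r
        have hrpos : 0 < r := by rw [hr]; linarith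
        have hexpand : ((k : ℝ) + 1) * u = (k : ℝ) * u + u := by ring
        have hru : r < u := by rw [hr]; linarith
        have hteq : t = (k : ℝ) * u + r := by rw [hr]; ring
        have hsplit : a t = a ((k : ℝ) * u) + a r := by
          nth_rewrite 1 [hteq]
          exact hadd _ _ hkpos' hrpos (by rw [← hteq]; exact htδ)
        have har : |a r| < ε / 2 := habs r hrpos (lt_trans hru huη)
        have hdiff : a t - c * t = a r - c * r := by
          rw [hsplit, hak, hau]
          rw [hteq]
          ring
        have hcr : |c * r| ≤ |c| * u := by
          rw [abs_mul, abs_of_pos hrpos]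
          exact mul_le_mul_of_nonneg_left (le_of_lt hru) (abs_nonneg c)
        calc |a t - c * t| = |a r - c * r| := by rw [hdiff]
          _ ≤ |a r| + |c * r| := abs_sub (a r) (c * r)
          _ ≤ ε := by linarith
  have hzero : a t - c * t = 0 := by
    by_contra h
    have hpos : 0 < |a t - c * t| := abs_pos.mpr h
    have := key (|a t - c * t| / 2) (by linarith)
    linarith
  linarith
lemma circle_char {φ : ℝ → ℂ}
    (hmul : ∀ s t : ℝ, 0 < s → 0 < t → φ (s + t) = φ s * φ t)
    (habs : ∀ t : ℝ, 0 < t → ‖φ t‖ = 1)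
    (hlim : Tendsto φ (𝓝[>] (0 : ℝ)) (𝓝 1)) :
    ∃ ω : ℝ, ∀ t : ℝ, 0 < t → φ t = Complex.exp (Complex.I * ω * t) := by
  have hne : ∀ t : ℝ, 0 < t → φ t ≠ 0 := by
    intro t ht h0
    have := habs t ht; rw [h0] at this; simp at this
  obtain ⟨δ₀, hδ₀, hd⟩ := Metric.tendsto_nhdsWithin_nhds.mp hlim (1/2) (by norm_num)
  set δ := δ₀ / 2 with hδdef
  have hδ : 0 < δ := by positivity
  clear_value δ
  have hhalf : ∀ t : ℝ, 0 < t → t ≤ δ → ‖φ t - 1‖ ≤ 1/2 := by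
    intro t ht htδ
    have := hd (Set.mem_Ioi.mpr ht)
      (by rw [Real.dist_eq, sub_zero, abs_of_pos ht]; rw [hδdef] at htδ; linarith)
    rw [dist_eq_norm] at this; linarith
  set a : ℝ → ℝ := fun t => (φ t).arg with ha
  have hre : ∀ t : ℝ, 0 < t → t ≤ δ → (1:ℝ)/2 ≤ (φ t).re := by
    intro t ht htδ
    have h1 : |(φ t).re - 1| ≤ ‖φ t - 1‖ := by
      simpa [Complex.sub_re] using Complex.abs_re_le_norm (φ t - 1)
    have h2 := hhalf t ht htδ
    have := abs_le.mp (h1.trans h2)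
    linarith [this.1]
  have hexp : ∀ t : ℝ, 0 < t → φ t = Complex.exp ((a t : ℝ) * Complex.I) := by
    intro t ht
    have h := Complex.norm_mul_exp_arg_mul_I (φ t)
    rw [show ‖φ t‖ = 1 by exact habs t ht] at h
    simp only [ha]
    simpa using h.symm
  have hsin : ∀ t : ℝ, 0 < t → Real.sin (a t) = (φ t).im := by
    intro t ht
    conv_rhs => rw [hexp t ht]
    rw [Complex.exp_ofReal_mul_I_im]
  have harglt : ∀ t : ℝ, 0 < t → t ≤ δ → |a t| < Real.pi / 2 := by
    intro t ht htδ
    exact Complex.abs_arg_lt_pi_div_two_iff.mpr (Or.inl (by linarith [hre t ht htδ]))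
  have hbound : ∀ t : ℝ, 0 < t → t ≤ δ → |a t| ≤ Real.pi / 2 * ‖φ t - 1‖ := by
    intro t ht htδ
    have hsinb : |Real.sin (a t)| ≤ ‖φ t - 1‖ := by
      rw [hsin t ht]
      have him : (φ t).im = (φ t - 1).im := by simp
      rw [him]
      simpa using Complex.abs_im_le_norm (φ t - 1)
    have hjordan : 2 / Real.pi * |a t| ≤ |Real.sin (a t)| := by
      have h1 : 2 / Real.pi * |a t| ≤ Real.sin |a t| :=
        Real.mul_le_sin (abs_nonneg _) (le_of_lt (harglt t ht htδ))
      have h2 : Real.sin |a t| ≤ |Real.sin (a t)| := by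
        rcases abs_cases (a t) with ⟨h, _⟩ | ⟨h, _⟩
        · rw [h]; exact le_abs_self _
        · rw [h, Real.sin_neg]; exact neg_le_abs _
      linarith
    have hπ : (0:ℝ) < Real.pi := Real.pi_pos
    have hstep := hjordan.trans hsinb
    calc |a t| = Real.pi / 2 * (2 / Real.pi * |a t|) := by field_simp
      _ ≤ Real.pi / 2 * ‖φ t - 1‖ :=
        mul_le_mul_of_nonneg_left hstep (by positivity)
  have hadd : ∀ s t : ℝ, 0 < s → 0 < t → s + t ≤ δ → a (s + t) = a s + a t := by
    intro s t hs ht hst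
    have hsδ : s ≤ δ := by linarith
    have htδ : t ≤ δ := by linarith
    have hπ : (0:ℝ) < Real.pi := Real.pi_pos
    have h1 : |a s| ≤ Real.pi / 4 := by
      have hb := hbound s hs hsδ
      have hh := hhalf s hs hsδ
      nlinarith
    have h2 : |a t| ≤ Real.pi / 4 := by
      have hb := hbound t ht htδ
      have hh := hhalf t ht htδ
      nlinarith
    have hmem : a s + a t ∈ Set.Ioc (-Real.pi) Real.pi := by
      obtain ⟨hA, hB⟩ := abs_le.mp h1
      obtain ⟨hC, hD⟩ := abs_le.mp h2
      constructor <;> [linarith; linarith]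
    simp only [ha]
    rw [hmul s t hs ht]
    exact Complex.arg_mul (hne s hs) (hne t ht) hmem
  have hφ1 : Tendsto (fun t => ‖φ t - 1‖) (𝓝[>] (0:ℝ)) (𝓝 0) :=
    tendsto_iff_norm_sub_tendsto_zero.mp hlim
  have halim : Tendsto a (𝓝[>] (0:ℝ)) (𝓝 0) := by
    have hev : ∀ᶠ t in 𝓝[>] (0:ℝ), ‖a t‖ ≤ Real.pi / 2 * ‖φ t - 1‖ := by
      filter_upwards [Ioc_mem_nhdsGT_of_mem (Set.mem_Ico.mpr ⟨le_refl (0:ℝ), hδ⟩)] with t ht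
      simpa [Real.norm_eq_abs] using hbound t ht.1 ht.2
    have htend : Tendsto (fun t => Real.pi / 2 * ‖φ t - 1‖) (𝓝[>] (0:ℝ)) (𝓝 0) := by
      have := hφ1.const_mul (Real.pi / 2)
      simpa using this
    exact squeeze_zero_norm' hev htend
  have hlin := additive_linear hδ hadd halim
  refine ⟨a δ / δ, ?_⟩
  have hsmallt : ∀ t : ℝ, 0 < t → t ≤ δ → φ t = Complex.exp (Complex.I * (a δ / δ) * t) := by
    intro t ht htδ
    rw [hexp t ht, hlin t ht htδ]
    congr 1
    push_cast
    ring
  intro t ht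
  obtain ⟨m, hm⟩ := exists_nat_gt (t / δ)
  have hm1 : (0:ℝ) < (m:ℝ) + 1 := by positivity
  set u := t / ((m:ℝ) + 1) with hu
  clear_value u
  have hupos : 0 < u := by rw [hu]; positivity
  have huδ : u ≤ δ := by
    rw [hu, div_le_iff₀ hm1]
    have h2 : t = (t / δ) * δ := by field_simp
    nlinarith
  have hut : ((m:ℝ) + 1) * u = t := by rw [hu]; field_simp
  have hpow : ∀ m' : ℕ, φ (((m':ℝ) + 1) * u) = (φ u) ^ (m' + 1) := by
    intro m'
    induction m' with
    | zero => norm_num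
    | succ m' ih =>
      have heq : (((m' + 1 : ℕ) : ℝ) + 1) * u = u + ((m' : ℝ) + 1) * u := by push_cast; ring
      rw [heq, hmul u _ hupos (by positivity), ih, pow_succ]
      ring
  have h1 : φ t = (φ u) ^ (m + 1) := by rw [← hut]; exact hpow m
  rw [h1, hsmallt u hupos huδ, ← Complex.exp_nat_mul]
  congr 1
  rw [← hut]
  push_cast
  ring

/-- If `(T_t)_{t>0}` is a `C₀` semigroup of linear isometries on `ℓ¹`, then every standard unit
vector `e_n` satisfies `T_t e_n = e^{iω_n t} e_n` for some real `ω_n`. -/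
theorem l1_isometric_semigroup_basis_eigenvectors
    (T : ℝ → lp (fun _ : ℕ => ℂ) 1 →L[ℂ] lp (fun _ : ℕ => ℂ) 1)
    (hsemi : ∀ s t : ℝ, 0 < s → 0 < t → T (s + t) = (T s).comp (T t))
    (hcont : ∀ x : lp (fun _ : ℕ => ℂ) 1, Tendsto (fun t => T t x) (𝓝[>] (0 : ℝ)) (𝓝 x))
    (hiso : ∀ t : ℝ, 0 < t → ∀ x : lp (fun _ : ℕ => ℂ) 1, ‖T t x‖ = ‖x‖) :
    ∀ n : ℕ, ∃ ω : ℝ, ∀ t : ℝ, 0 < t →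
      T t (lp.single 1 n (1 : ℂ)) = Complex.exp (Complex.I * ω * t) • lp.single 1 n (1 : ℂ) := by
  intro n
  -- abbreviation for basis vectors
  set e : ℕ → lp (fun _ : ℕ => ℂ) 1 := fun k => lp.single 1 k (1 : ℂ) with he
  -- Step 1: disjointness of columns
  have hdisj : ∀ t : ℝ, 0 < t → ∀ j k : ℕ, j ≠ k → ∀ i : ℕ,
      (T t (e j)) i * (T t (e k)) i = 0 := by
    intro t ht j k hjk i
    have hY : ‖T t (e j)‖ = 1 := by rw [hiso t ht, he]; exact norm_e j
    have hZ : ‖T t (e k)‖ = 1 := by rw [hiso t ht, he]; exact norm_e k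
    have key : ∀ c : ℂ, ‖c‖ = 1 →
        ‖(T t (e j)) i + (c • T t (e k)) i‖ = ‖(T t (e j)) i‖ + ‖(c • T t (e k)) i‖ := by
      intro c hc
      have hsum : ‖T t (e j) + c • T t (e k)‖ = ‖T t (e j)‖ + ‖c • T t (e k)‖ := by
        have h1 : T t (e j) + c • T t (e k) = T t (e j + c • e k) := by
          rw [map_add, map_smul]
        rw [h1, hiso t ht, he]
        rw [norm_smul, hZ, hc, hY]
        have := norm_single_add_smul_single hjk c hc
        rw [this]; norm_num
      exact pointwise_add_eq hsum i
    have hcoe : ∀ (c : ℂ) (w : lp (fun _ : ℕ => ℂ) 1), (c • w) i = c * w i := by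
      intro c w; rw [lp.coeFn_smul, Pi.smul_apply, smul_eq_mul]
    have h1 := key 1 (by norm_num)
    have h2 := key (-1) (by norm_num)
    rw [hcoe] at h1 h2
    set y := (T t (e j)) i
    set z := (T t (e k)) i
    have h1' : ‖y + z‖ = ‖y‖ + ‖z‖ := by simpa using h1
    have h2' : ‖y - z‖ = ‖y‖ + ‖z‖ := by
      have : y + (-1) * z = y - z := by ring
      rw [this] at h2
      simpa [norm_neg] using h2
    exact complex_orth h1' h2'
  -- Step 2: matrix action on coordinate k
  have hmat : ∀ s : ℝ, 0 < s → ∀ k : ℕ, (∀ j : ℕ, j ≠ k → (T s (e j)) k = 0) →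
      ∀ y : lp (fun _ : ℕ => ℂ) 1, (T s y) k = y k * (T s (e k)) k := by
    intro s hs k hzero y
    have hy : HasSum (fun i => lp.single (E := fun _ : ℕ => ℂ) 1 i (y i)) y :=
      lp.hasSum_single (by norm_num) y
    have hy2 : HasSum (fun i => evCLM k (T s (lp.single (E := fun _ : ℕ => ℂ) 1 i (y i))))
        (evCLM k (T s y)) := (hy.mapL (T s)).mapL (evCLM k)
    have hsingle : ∀ i : ℕ, lp.single (E := fun _ : ℕ => ℂ) 1 i (y i) = y i • e i := by
      intro i
      rw [he]
      rw [← lp.single_smul]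
      norm_num
    have hterm : ∀ i : ℕ, i ≠ k → evCLM k (T s (lp.single (E := fun _ : ℕ => ℂ) 1 i (y i))) = 0 := by
      intro i hik
      rw [hsingle i, map_smul, map_smul]
      have h0 : evCLM k (T s (e i)) = 0 := by
        rw [evCLM_apply]; exact hzero i hik
      rw [h0, smul_zero]
    have hfin := hasSum_single (f := fun i => evCLM k (T s (lp.single (E := fun _ : ℕ => ℂ) 1 i (y i)))) k hterm
    have huniq := hy2.unique hfin
    rw [evCLM_apply] at huniq
    rw [huniq]
    show evCLM k (T s (lp.single (E := fun _ : ℕ => ℂ) 1 k (y k))) = y k * (T s (e k)) k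
    rw [hsingle k, map_smul, map_smul, evCLM_apply, smul_eq_mul]
  -- Φ k t = diagonal entry
  -- Step 3: small-time diagonal dominance
  have hsmall : ∀ k : ℕ, ∃ δ : ℝ, 0 < δ ∧ ∀ t : ℝ, 0 < t → t ≤ δ →
      ‖(T t (e k)) k - 1‖ ≤ 1/2 := by
    intro k
    obtain ⟨δ, hδ, hd⟩ := Metric.tendsto_nhdsWithin_nhds.mp (hcont (e k)) (1/2) (by norm_num)
    refine ⟨δ/2, by linarith, fun t ht htδ => ?_⟩
    have hdist := hd (Set.mem_Ioi.mpr ht)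
      (by rw [Real.dist_eq, sub_zero, abs_of_pos ht]; linarith)
    have hcoord : ‖(T t (e k)) k - 1‖ ≤ dist (T t (e k)) (e k) := by
      rw [dist_eq_norm]
      have hb := lp.norm_apply_le_norm (one_ne_zero : (1 : ENNReal) ≠ 0) (T t (e k) - e k) k
      have hsub : (T t (e k) - e k) k = (T t (e k)) k - 1 := by
        rw [lp.coeFn_sub, Pi.sub_apply, he]
        rw [lp.single_apply_self]
      rw [hsub] at hb
      exact hb
    linarith
  -- Step 4: conditional multiplicativity
  have hΦmul : ∀ k : ℕ, ∀ s t : ℝ, 0 < s → 0 < t → (T s (e k)) k ≠ 0 →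
      (T (s + t) (e k)) k = (T s (e k)) k * (T t (e k)) k := by
    intro k s t hs ht hΦs
    have hz : ∀ j : ℕ, j ≠ k → (T s (e j)) k = 0 := by
      intro j hjk
      exact (mul_eq_zero.mp (hdisj s hs j k hjk k)).resolve_right hΦs
    have hm := hmat s hs k hz (T t (e k))
    rw [hsemi s t hs ht]
    rw [ContinuousLinearMap.comp_apply]
    rw [hm]
    ring
  -- Step 5: powers
  have hΦpow : ∀ k : ℕ, ∀ u : ℝ, 0 < u → (T u (e k)) k ≠ 0 → ∀ m : ℕ,
      (T (((m:ℝ) + 1) * u) (e k)) k = ((T u (e k)) k) ^ (m + 1) := by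
    intro k u hu hΦu m
    induction m with
    | zero => norm_num
    | succ m ih =>
      have heq : (((m + 1 : ℕ) : ℝ) + 1) * u = u + ((m : ℝ) + 1) * u := by push_cast; ring
      rw [heq, hΦmul k u (((m : ℝ) + 1) * u) hu (by positivity) hΦu, ih, pow_succ]
      ring
  -- Step 6: nonvanishing of diagonal entries
  have hΦne : ∀ k : ℕ, ∀ t : ℝ, 0 < t → (T t (e k)) k ≠ 0 := by
    intro k t ht
    obtain ⟨δ, hδ, hsm⟩ := hsmall k
    obtain ⟨m, hm⟩ := exists_nat_gt (t / δ)
    have hm1 : (0:ℝ) < (m:ℝ) + 1 := by positivity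
    set u := t / ((m:ℝ) + 1) with hu
    clear_value u
    have hupos : 0 < u := by rw [hu]; positivity
    have huδ : u ≤ δ := by
      rw [hu, div_le_iff₀ hm1]
      have h2 : t = (t / δ) * δ := by field_simp
      nlinarith
    have hΦu : (T u (e k)) k ≠ 0 := by
      intro h0
      have := hsm u hupos huδ
      rw [h0] at this
      norm_num at this
    have hut : ((m:ℝ) + 1) * u = t := by rw [hu]; field_simp
    have hp := hΦpow k u hupos hΦu m
    rw [hut] at hp
    rw [hp]
    exact pow_ne_zero _ hΦu
  -- Step 7: full multiplicativity for k = n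
  have hφmul : ∀ s t : ℝ, 0 < s → 0 < t →
      (T (s + t) (e n)) n = (T s (e n)) n * (T t (e n)) n := by
    intro s t hs ht
    exact hΦmul n s t hs ht (hΦne n s hs)
  -- Step 8: diagonality
  have hdiag : ∀ t : ℝ, 0 < t → ∀ j : ℕ, j ≠ n → (T t (e n)) j = 0 := by
    intro t ht j hj
    have h := hdisj t ht n j (fun h => hj h.symm) j
    exact (mul_eq_zero.mp h).resolve_right (hΦne j t ht)
  -- Step 9: eigenvector property
  have heig : ∀ t : ℝ, 0 < t → T t (e n) = ((T t (e n)) n) • e n := by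
    intro t ht
    refine lp.ext (funext fun i => ?_)
    have hrhs : (((T t (e n)) n) • e n) i = (T t (e n)) n * e n i := by
      rw [lp.coeFn_smul, Pi.smul_apply, smul_eq_mul]
    rw [hrhs]
    by_cases hi : i = n
    · subst hi
      rw [he, lp.single_apply_self, mul_one]
    · rw [hdiag t ht i hi, he, lp.single_apply_ne 1 n 1 hi, mul_zero]
  -- Step 10: unimodularity
  have hφabs : ∀ t : ℝ, 0 < t → ‖(T t (e n)) n‖ = 1 := by
    intro t ht
    have h1 : ‖T t (e n)‖ = 1 := by rw [hiso t ht, he]; exact norm_e n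
    rw [heig t ht] at h1
    rw [norm_smul, he] at h1
    rw [norm_e n, mul_one] at h1
    exact h1
  -- Step 11: continuity at 0
  have hφlim : Tendsto (fun t => (T t (e n)) n) (𝓝[>] (0:ℝ)) (𝓝 1) := by
    have h1 : Tendsto (fun t => ‖T t (e n) - e n‖) (𝓝[>] (0:ℝ)) (𝓝 0) :=
      tendsto_iff_norm_sub_tendsto_zero.mp (hcont (e n))
    have h2 : ∀ t : ℝ, ‖(T t (e n)) n - 1‖ ≤ ‖T t (e n) - e n‖ := by
      intro t
      have hb := lp.norm_apply_le_norm (one_ne_zero : (1 : ENNReal) ≠ 0) (T t (e n) - e n) n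
      have hsub : (T t (e n) - e n) n = (T t (e n)) n - 1 := by
        rw [lp.coeFn_sub, Pi.sub_apply, he, lp.single_apply_self]
      rw [hsub] at hb
      exact hb
    have h3 : Tendsto (fun t => (T t (e n)) n - 1) (𝓝[>] (0:ℝ)) (𝓝 0) :=
      squeeze_zero_norm h2 h1
    have h4 := h3.add_const 1
    simpa using h4
  -- conclude via circle_char
  obtain ⟨ω, hω⟩ := circle_char hφmul hφabs hφlim
  refine ⟨ω, fun t ht => ?_⟩
  rw [show lp.single 1 n (1:ℂ) = e n from by rw [he]]
  rw [heig t ht, hω t ht]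
end
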